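/- arXiv:1812.02322 — 5 statements merged into one kernel-verified Lean document; each statement's English description precedes it below -/
import Mathlib

section
/- Let Z be a countably based infinite elementary abelian pro-p group (isomorphic to a countable product of copies of C_p), equipped with a filtration series S: Z = Z_0 ⊇ Z_1 ⊇ … of open subgroups with trivial intersection. Then for every η ∈ [0,1] there exists a closed subgroup K ≤ Z such that the limit of log_p |K Z_i : Z_i| / log_p |Z : Z_i| as i → ∞ exists and equals η. -/
open Filter

/-- The countably based infinite elementary abelian pro-`p` group
`Z ≅ ∏_{i∈ℕ} C_p`, with the product (profinite) topology coming from the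
discrete topology on each factor `C_p = ZMod p`. -/
instance (n : ℕ) : TopologicalSpace (ZMod n) := ⊥

instance (n : ℕ) : DiscreteTopology (ZMod n) := ⟨rfl⟩

instance (n : ℕ) : IsTopologicalAddGroup (ZMod n) where
  continuous_add := continuous_of_discreteTopology
  continuous_neg := continuous_of_discreteTopology

section Aux

open Module Submodule

variable {𝕜 M : Type*} [Field 𝕜] [AddCommGroup M] [Module 𝕜 M]

/-- Rank formula for a pair of nested submodules. -/
lemma auxA (W' W : Submodule 𝕜 M) (hle : W' ≤ W) [FiniteDimensional 𝕜 (M ⧸ W')] :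
    finrank 𝕜 (M ⧸ W') = finrank 𝕜 (M ⧸ W) + finrank 𝕜 ↥(W.map W'.mkQ) := by
  let π : (M ⧸ W') →ₗ[𝕜] M ⧸ W := Submodule.mapQ W' W LinearMap.id hle
  have hsurj : Function.Surjective π := by
    intro x
    obtain ⟨y, rfl⟩ := W.mkQ_surjective x
    exact ⟨W'.mkQ y, by simp [π, Submodule.mapQ_apply]⟩
  have hker : LinearMap.ker π = W.map W'.mkQ := by
    ext x
    obtain ⟨y, rfl⟩ := W'.mkQ_surjective x
    simp only [LinearMap.mem_ker, π, Submodule.mapQ_apply, LinearMap.id_coe, id_eq,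
      Submodule.mkQ_apply, Submodule.Quotient.mk_eq_zero, Submodule.mem_map]
    constructor
    · intro h; exact ⟨y, h, rfl⟩
    · rintro ⟨w, hw, hwy⟩
      have hsub : w - y ∈ W' := (Submodule.Quotient.eq _).mp hwy
      have h2 := W.sub_mem hw (hle hsub)
      simpa using h2
  have h := LinearMap.finrank_range_add_finrank_ker π
  rw [LinearMap.range_eq_top.2 hsurj, finrank_top, hker] at h
  omega

lemma auxMono (W' W : Submodule 𝕜 M) (hle : W' ≤ W) [FiniteDimensional 𝕜 (M ⧸ W')] :
    finrank 𝕜 (M ⧸ W) ≤ finrank 𝕜 (M ⧸ W') := by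
  rw [auxA W' W hle]; omega

lemma auxD (W' W : Submodule 𝕜 M) (hle : W' ≤ W) [FiniteDimensional 𝕜 (M ⧸ W')]
    (h : finrank 𝕜 (M ⧸ W') ≤ finrank 𝕜 (M ⧸ W)) : W ≤ W' := by
  have hA := auxA W' W hle
  have h0 : finrank 𝕜 ↥(W.map W'.mkQ) = 0 := by omega
  have hbot : W.map W'.mkQ = ⊥ := Submodule.finrank_eq_zero.mp h0
  intro x hx
  have hmem : W'.mkQ x ∈ W.map W'.mkQ := Submodule.mem_map_of_mem hx
  rw [hbot, Submodule.mem_bot, Submodule.mkQ_apply, Submodule.Quotient.mk_eq_zero] at hmem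
  exact hmem

/-- Existence of a subspace of `W` of prescribed finite dimension meeting `W'` trivially. -/
lemma auxB (W' W : Submodule 𝕜 M) (hle : W' ≤ W) [FiniteDimensional 𝕜 (M ⧸ W')]
    (r : ℕ) (hr : r + finrank 𝕜 (M ⧸ W) ≤ finrank 𝕜 (M ⧸ W')) :
    ∃ G : Submodule 𝕜 M, G ≤ W ∧ G ⊓ W' = ⊥ ∧ finrank 𝕜 ↥G = r ∧
      FiniteDimensional 𝕜 ↥G := by
  set J := W.map W'.mkQ with hJ
  have hJr : r ≤ finrank 𝕜 ↥J := by
    have h := auxA W' W hle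
    rw [← hJ] at h
    omega
  let b := Module.finBasis 𝕜 ↥J
  let v : Fin r → M ⧸ W' := fun j => ((b (Fin.castLE hJr j) : ↥J) : M ⧸ W')
  have hv : ∀ j, v j ∈ J := fun j => (b (Fin.castLE hJr j)).2
  have hvi : LinearIndependent 𝕜 v := by
    have h1 : LinearIndependent 𝕜 (fun i : Fin (finrank 𝕜 ↥J) => ((b i : ↥J) : M ⧸ W')) :=
      b.linearIndependent.map' J.subtype J.ker_subtype
    exact h1.comp (Fin.castLE hJr) (Fin.castLE_injective hJr)
  choose l hlW hlv using fun j => Submodule.mem_map.mp (hv j)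
  have hcomp : (W'.mkQ ∘ l) = v := by
    funext j; simp [Function.comp, hlv j]
  have hli : LinearIndependent 𝕜 l := by
    apply LinearIndependent.of_comp W'.mkQ
    rw [hcomp]; exact hvi
  refine ⟨Submodule.span 𝕜 (Set.range l), ?_, ?_, ?_, ?_⟩
  · rw [Submodule.span_le]; rintro x ⟨j, rfl⟩; exact hlW j
  · rw [eq_bot_iff]
    rintro x hx
    obtain ⟨hx1, hx2⟩ := Submodule.mem_inf.mp hx
    obtain ⟨c, rfl⟩ := (mem_span_range_iff_exists_fun 𝕜).mp hx1
    have h0 : ∑ j, c j • v j = 0 := by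
      have hq : W'.mkQ (∑ j, c j • l j) = 0 := by
        rw [Submodule.mkQ_apply, Submodule.Quotient.mk_eq_zero]; exact hx2
      rw [map_sum] at hq
      simpa only [map_smul, Submodule.mkQ_apply, ← hlv] using hq
    have hc : ∀ j, c j = 0 := Fintype.linearIndependent_iff.mp hvi c h0
    simp [hc]
  · rw [finrank_span_eq_card hli, Fintype.card_fin]
  · exact FiniteDimensional.span_of_finite 𝕜 (Set.finite_range l)

end Aux

set_option maxHeartbeats 2000000 in
/-- For every filtration series `S : Z = Z_0 ⊇ Z_1 ⊇ …` of open
subgroups with trivial intersection of `Z ≅ C_p^{ℵ₀}` and every `η ∈ [0,1]`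
there is a closed subgroup `K ≤ Z` with
`log_p |K Z_i : Z_i| / log_p |Z : Z_i| → η` (a genuine limit, i.e. `K` has
strong Hausdorff dimension `η`). -/
theorem stmt2 (p : ℕ) (hp : p.Prime)
    (S : ℕ → AddSubgroup (ℕ → ZMod p)) (hS0 : S 0 = ⊤) (hanti : Antitone S)
    (hopen : ∀ i, IsOpen ((S i : Set (ℕ → ZMod p))))
    (hint : ⨅ i, S i = ⊥)
    (η : ℝ) (hη0 : 0 ≤ η) (hη1 : η ≤ 1) :
    ∃ K : AddSubgroup (ℕ → ZMod p), IsClosed ((K : Set (ℕ → ZMod p))) ∧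
      Tendsto
        (fun i : ℕ =>
          Real.log (((S i).relIndex (K ⊔ S i) : ℕ)) / Real.log (((S i).index : ℕ)))
        atTop (nhds η) := by
  classical
  haveI : Fact p.Prime := ⟨hp⟩
  haveI : NeZero p := ⟨hp.ne_zero⟩
  set V := (ℕ → ZMod p) with hV
  -- submodule versions of the filtration
  let W : ℕ → Submodule (ZMod p) V := fun i => AddSubgroup.toZModSubmodule p (S i)
  have hWanti : Antitone W := fun a b h => (AddSubgroup.toZModSubmodule p).monotone (hanti h)
  have hfinQ : ∀ i, Finite (V ⧸ W i) := fun i =>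
    AddSubgroup.quotient_finite_of_isOpen (S i) (hopen i)
  let d : ℕ → ℕ := fun i => Module.finrank (ZMod p) (V ⧸ W i)
  let m : ℕ → ℕ := fun i => ⌈η * d i⌉₊
  have hd0 : d 0 = 0 := by
    have hW0 : W 0 = ⊤ := by
      ext x; simp [W, hS0]
    have : Subsingleton (V ⧸ W 0) := by
      rw [hW0]; exact Submodule.Quotient.subsingleton_iff.mpr rfl
    exact Module.finrank_zero_of_subsingleton
  have hdmono : Monotone d := by
    apply monotone_nat_of_le_succ
    intro i
    haveI := hfinQ (i + 1)
    exact auxMono (W (i + 1)) (W i) (hWanti (Nat.le_succ i))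
  have hm_le_d : ∀ i, m i ≤ d i := by
    intro i
    apply Nat.ceil_le.mpr
    calc η * d i ≤ 1 * d i := by
          apply mul_le_mul_of_nonneg_right hη1 (Nat.cast_nonneg _)
      _ = (d i : ℝ) := one_mul _
  have hmmono : Monotone m := fun a b h =>
    Nat.ceil_le_ceil (mul_le_mul_of_nonneg_left (Nat.cast_le.mpr (hdmono h)) hη0)
  have hstep_ineq : ∀ i, (m (i + 1) - m i) + d i ≤ d (i + 1) := by
    intro i
    have hdd : d i ≤ d (i + 1) := hdmono (Nat.le_succ i)
    have h1 : η * d (i + 1) ≤ η * d i + ((d (i + 1) - d i : ℕ) : ℝ) := by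
      have hc : ((d (i + 1) - d i : ℕ) : ℝ) = (d (i + 1) : ℝ) - d i := by
        push_cast [Nat.cast_sub hdd]; ring
      rw [hc]
      have hd' : (d i : ℝ) ≤ d (i + 1) := Nat.cast_le.mpr hdd
      nlinarith
    have h2 : m (i + 1) ≤ m i + (d (i + 1) - d i) := by
      calc m (i + 1) = ⌈η * d (i + 1)⌉₊ := rfl
        _ ≤ ⌈η * d i + ((d (i + 1) - d i : ℕ) : ℝ)⌉₊ := Nat.ceil_le_ceil h1
        _ = ⌈η * d i⌉₊ + (d (i + 1) - d i) :=
            Nat.ceil_add_natCast (mul_nonneg hη0 (Nat.cast_nonneg _)) _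
    have := hm_le_d i
    omega
  -- the inductive step for the chain of finite-dimensional subspaces
  have stepex : ∀ i (F : Submodule (ZMod p) V), F ⊓ W i = ⊥ → Module.finrank (ZMod p) F = m i →
      FiniteDimensional (ZMod p) F →
      ∃ F', F ≤ F' ∧ F' ≤ F ⊔ W i ∧ F' ⊓ W (i + 1) = ⊥ ∧
        Module.finrank (ZMod p) F' = m (i + 1) ∧ FiniteDimensional (ZMod p) F' := by
    intro i F hFW hFr hFfd
    haveI := hfinQ (i + 1)
    obtain ⟨G, hGW, hGW', hGr, hGfd⟩ := auxB (W (i + 1)) (W i) (hWanti (Nat.le_succ i))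
      (m (i + 1) - m i) (hstep_ineq i)
    haveI := hFfd; haveI := hGfd
    have hFG : F ⊓ G = ⊥ := by
      rw [eq_bot_iff]
      rintro x hx
      obtain ⟨hx1, hx2⟩ := Submodule.mem_inf.mp hx
      have : x ∈ F ⊓ W i := Submodule.mem_inf.mpr ⟨hx1, hGW hx2⟩
      rwa [hFW] at this
    refine ⟨F ⊔ G, le_sup_left, sup_le_sup_left hGW F, ?_, ?_, inferInstance⟩
    · rw [eq_bot_iff]
      rintro x hx
      obtain ⟨hx1, hx2⟩ := Submodule.mem_inf.mp hx
      obtain ⟨f, hf, g, hg, rfl⟩ := Submodule.mem_sup.mp hx1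
      have hfW : f ∈ W i := by
        have h1 : f + g ∈ W i := hWanti (Nat.le_succ i) hx2
        have h2 : g ∈ W i := hGW hg
        simpa using W i |>.sub_mem h1 h2
      have hf0 : f = 0 := by
        have : f ∈ F ⊓ W i := Submodule.mem_inf.mpr ⟨hf, hfW⟩
        rwa [hFW, Submodule.mem_bot] at this
      have hg0 : g = 0 := by
        have hgW' : g ∈ W (i + 1) := by rwa [hf0, zero_add] at hx2
        have : g ∈ G ⊓ W (i + 1) := Submodule.mem_inf.mpr ⟨hg, hgW'⟩
        rwa [hGW', Submodule.mem_bot] at this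
      rw [hf0, hg0, add_zero]
      exact Submodule.zero_mem ⊥
    · have hsum := Submodule.finrank_sup_add_finrank_inf_eq F G
      rw [hFG] at hsum
      have hmm : m i ≤ m (i + 1) := hmmono (Nat.le_succ i)
      simp only [finrank_bot, add_zero] at hsum
      rw [hsum, hFr, hGr]
      omega
  choose F' hF'1 hF'2 hF'3 hF'4 hF'5 using stepex
  -- build the chain by recursion
  let Fs : (i : ℕ) → {F : Submodule (ZMod p) V //
      F ⊓ W i = ⊥ ∧ Module.finrank (ZMod p) F = m i ∧ FiniteDimensional (ZMod p) F} :=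
    fun i => Nat.rec
      ⟨⊥, by simp, by
        show Module.finrank (ZMod p) (⊥ : Submodule (ZMod p) V) = m 0
        simp [m, hd0], inferInstance⟩
      (fun i prev => ⟨F' i prev.1 prev.2.1 prev.2.2.1 prev.2.2.2,
        hF'3 i prev.1 prev.2.1 prev.2.2.1 prev.2.2.2,
        hF'4 i prev.1 prev.2.1 prev.2.2.1 prev.2.2.2,
        hF'5 i prev.1 prev.2.1 prev.2.2.1 prev.2.2.2⟩) i
  let F : ℕ → Submodule (ZMod p) V := fun i => (Fs i).1
  have hFW : ∀ i, F i ⊓ W i = ⊥ := fun i => (Fs i).2.1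
  have hFr : ∀ i, Module.finrank (ZMod p) (F i) = m i := fun i => (Fs i).2.2.1
  have hFsucc : ∀ i, F i ≤ F (i + 1) :=
    fun i => hF'1 i (Fs i).1 (Fs i).2.1 (Fs i).2.2.1 (Fs i).2.2.2
  have hFsub : ∀ i, F (i + 1) ≤ F i ⊔ W i :=
    fun i => hF'2 i (Fs i).1 (Fs i).2.1 (Fs i).2.2.1 (Fs i).2.2.2
  have hFmono : Monotone F := monotone_nat_of_le_succ hFsucc
  have hchain : ∀ i k, F (i + k) ≤ F i ⊔ W i := by
    intro i k
    induction k with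
    | zero => exact le_sup_left
    | succ k ih =>
      have h1 : F (i + k + 1) ≤ F (i + k) ⊔ W (i + k) := hFsub (i + k)
      refine h1.trans (sup_le (ih.trans le_rfl) ?_)
      exact (hWanti (Nat.le_add_right i k)).trans le_sup_right
  have hFiWi : ∀ i j, F j ≤ F i ⊔ W i := by
    intro i j
    rcases le_or_gt j i with h | h
    · exact (hFmono h).trans le_sup_left
    · have hj : j = i + (j - i) := by omega
      rw [hj]; exact hchain i (j - i)
  -- the closed subgroup
  set Hsub : Submodule (ZMod p) V := ⨆ i, F i with hHsub
  set K : AddSubgroup V := Hsub.toAddSubgroup.topologicalClosure with hK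
  refine ⟨K, AddSubgroup.isClosed_topologicalClosure _, ?_⟩
  have hWS : ∀ i, (W i).toAddSubgroup = S i := fun i => rfl
  have hsupK : ∀ i, K ⊔ S i = (F i ⊔ W i).toAddSubgroup := by
    intro i
    have hSle : S i ≤ (F i ⊔ W i).toAddSubgroup := by
      rw [← hWS i]; exact Submodule.toAddSubgroup_mono le_sup_right
    apply le_antisymm
    · apply sup_le _ hSle
      apply AddSubgroup.topologicalClosure_minimal
      · exact Submodule.toAddSubgroup_mono (iSup_le (hFiWi i))
      · apply AddSubgroup.isClosed_of_isOpen
        exact AddSubgroup.isOpen_mono hSle (hopen i)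
    · intro x hx
      obtain ⟨y, hy, z, hz, rfl⟩ := Submodule.mem_sup.mp hx
      have hyK : y ∈ K := by
        apply AddSubgroup.le_topologicalClosure
        show y ∈ Hsub.toAddSubgroup
        exact Submodule.mem_iSup_of_mem i hy
      exact AddSubgroup.add_mem_sup hyK hz
  have hindex : ∀ i, (S i).index = p ^ d i := by
    intro i
    haveI := hfinQ i
    haveI : Fintype (V ⧸ W i) := Fintype.ofFinite _
    have h1 : (S i).index = Nat.card (V ⧸ W i) := AddSubgroup.index_eq_card (S i)
    rw [h1, Nat.card_eq_fintype_card, Module.card_eq_pow_finrank (K := ZMod p), ZMod.card]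
  have hquot : ∀ i, Module.finrank (ZMod p) (V ⧸ (F i ⊔ W i)) + m i = d i := by
    intro i
    haveI := hfinQ i
    have hle' : W i ≤ F i ⊔ W i := le_sup_right
    have e1 := Submodule.quotientQuotientEquivQuotient (W i) (F i ⊔ W i) hle'
    have hmapW : (W i).map (W i).mkQ = ⊥ := by
      rw [eq_bot_iff]
      rintro x ⟨y, hy, rfl⟩
      have hy' : y ∈ W i := hy
      simp [Submodule.Quotient.mk_eq_zero, hy']
    have hmap : (F i ⊔ W i).map (W i).mkQ = (F i).map (W i).mkQ := by
      rw [Submodule.map_sup, hmapW, sup_bot_eq]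
    have e2 : Module.finrank (ZMod p) (V ⧸ (F i ⊔ W i))
        = Module.finrank (ZMod p) ((V ⧸ W i) ⧸ (F i).map (W i).mkQ) := by
      rw [← hmap]
      exact (LinearEquiv.finrank_eq e1).symm
    have e3 := Submodule.finrank_quotient_add_finrank ((F i).map (W i).mkQ)
    have hinj : Function.Injective ((W i).mkQ.domRestrict (F i)) := by
      rw [← LinearMap.ker_eq_bot, eq_bot_iff]
      rintro ⟨x, hxF⟩ hx
      have hxW : x ∈ W i := by
        simpa [LinearMap.mem_ker, LinearMap.domRestrict_apply,
          Submodule.Quotient.mk_eq_zero] using hx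
      have hmem : x ∈ F i ⊓ W i := Submodule.mem_inf.mpr ⟨hxF, hxW⟩
      rw [hFW i, Submodule.mem_bot] at hmem
      exact Submodule.mem_bot _ |>.mpr (Subtype.ext hmem)
    have e4 : Module.finrank (ZMod p) ((F i).map (W i).mkQ) = m i := by
      have h5 := LinearEquiv.finrank_eq (LinearEquiv.ofInjective _ hinj)
      rw [LinearMap.range_domRestrict] at h5
      rw [← h5, hFr i]
    rw [e2, ← e4]
    exact e3
  have hrel : ∀ i, (S i).relIndex (K ⊔ S i) = p ^ m i := by
    intro i
    haveI := hfinQ i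
    haveI hfd : FiniteDimensional (ZMod p) (V ⧸ (F i ⊔ W i)) := by
      have e1 := Submodule.quotientQuotientEquivQuotient (W i) (F i ⊔ W i) le_sup_right
      exact Module.Finite.equiv e1
    haveI : Finite (V ⧸ (F i ⊔ W i)) := Module.finite_of_finite (ZMod p)
    haveI : Fintype (V ⧸ (F i ⊔ W i)) := Fintype.ofFinite _
    have hidx2 : (K ⊔ S i).index = p ^ (Module.finrank (ZMod p) (V ⧸ (F i ⊔ W i))) := by
      rw [hsupK i]
      have h1 : ((F i ⊔ W i).toAddSubgroup).index = Nat.card (V ⧸ (F i ⊔ W i)) :=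
        AddSubgroup.index_eq_card _
      rw [h1, Nat.card_eq_fintype_card, Module.card_eq_pow_finrank (K := ZMod p), ZMod.card]
    have hmul := AddSubgroup.relIndex_mul_index (H := S i) (K := K ⊔ S i) le_sup_right
    rw [hidx2, hindex i] at hmul
    have hq := hquot i
    have hpow : p ^ d i = p ^ m i * p ^ (Module.finrank (ZMod p) (V ⧸ (F i ⊔ W i))) := by
      rw [← pow_add]; congr 1; omega
    rw [hpow] at hmul
    exact Nat.eq_of_mul_eq_mul_right (pow_pos hp.pos _) hmul
  -- the codimensions tend to infinity
  have hd_unbdd : ∀ b : ℕ, ∃ i, b ≤ d i := by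
    by_contra hcon
    push_neg at hcon
    obtain ⟨b, hb⟩ := hcon
    have hne : (Set.range d).Nonempty := ⟨d 0, 0, rfl⟩
    have hbdd : BddAbove (Set.range d) := ⟨b, by rintro n ⟨i, rfl⟩; exact (hb i).le⟩
    obtain ⟨i₀, hi₀⟩ := Nat.sSup_mem hne hbdd
    have hmax : ∀ j, d j ≤ d i₀ := fun j => hi₀ ▸ le_csSup hbdd ⟨j, rfl⟩
    have hWeq : ∀ j, i₀ ≤ j → W j = W i₀ := by
      intro j hj
      haveI := hfinQ j
      exact le_antisymm (hWanti hj) (auxD (W j) (W i₀) (hWanti hj) (hmax j))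
    have hbot : W i₀ = ⊥ := by
      rw [eq_bot_iff]
      intro x hx
      have hxall : ∀ j, x ∈ S j := by
        intro j
        rcases le_or_gt j i₀ with h | h
        · exact hanti h hx
        · have h2 : x ∈ W j := (hWeq j h.le).symm ▸ hx
          exact h2
      have hxi : x ∈ ⨅ j, S j := AddSubgroup.mem_iInf.mpr hxall
      rw [hint] at hxi
      simpa using hxi
    haveI := hfinQ i₀
    haveI hfdV : FiniteDimensional (ZMod p) V := by
      have e := Submodule.quotEquivOfEqBot (W i₀) hbot
      exact Module.Finite.equiv e
    haveI : Finite V := Module.finite_of_finite (ZMod p)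
    haveI : Fact (1 < p) := ⟨hp.one_lt⟩
    haveI hinf : Infinite V := by
      apply Infinite.of_injective (fun n : ℕ => (Pi.single n 1 : V))
      intro a b hab
      by_contra hne'
      have h1 : (Pi.single a 1 : V) a = (Pi.single b 1 : V) a := congrFun hab a
      rw [Pi.single_eq_same, Pi.single_eq_of_ne hne'] at h1
      exact one_ne_zero h1
    exact not_finite V
  have hd_tendsto : Tendsto d atTop atTop :=
    tendsto_atTop_atTop_of_monotone hdmono hd_unbdd
  -- final computation of the limit
  have hlogp : Real.log p ≠ 0 := ne_of_gt (Real.log_pos (by exact_mod_cast hp.one_lt))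
  have heq : ∀ᶠ i in atTop,
      Real.log (((S i).relIndex (K ⊔ S i) : ℕ)) /
        Real.log (((S i).index : ℕ)) = (m i : ℝ) / (d i : ℝ) := by
    filter_upwards with i
    rw [hrel i, hindex i]
    push_cast
    rw [Real.log_pow, Real.log_pow, mul_comm ((m i : ℝ)) _, mul_comm ((d i : ℝ)) _,
      mul_div_mul_left _ _ hlogp]
  have hmain : Tendsto (fun i => (m i : ℝ) / (d i : ℝ)) atTop (nhds η) := by
    have hupper : Tendsto (fun i => η + 1 / (d i : ℝ)) atTop (nhds η) := by
      have h0 : Tendsto (fun i => 1 / (d i : ℝ)) atTop (nhds 0) :=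
        tendsto_one_div_atTop_nhds_zero_nat.comp hd_tendsto
      simpa using tendsto_const_nhds.add h0
    apply tendsto_of_tendsto_of_tendsto_of_le_of_le'
      (tendsto_const_nhds : Tendsto (fun _ : ℕ => η) atTop (nhds η)) hupper
    · filter_upwards [hd_tendsto.eventually_ge_atTop 1] with i hdi
      have hd0' : (0 : ℝ) < d i := by exact_mod_cast hdi
      rw [le_div_iff₀ hd0']
      exact Nat.le_ceil _
    · filter_upwards [hd_tendsto.eventually_ge_atTop 1] with i hdi
      have hd0' : (0 : ℝ) < d i := by exact_mod_cast hdi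
      rw [div_le_iff₀ hd0']
      have h1 : (m i : ℝ) < η * d i + 1 :=
        Nat.ceil_lt_add_one (mul_nonneg hη0 (Nat.cast_nonneg _))
      have h2 : (η + 1 / (d i : ℝ)) * d i = η * d i + 1 := by field_simp
      rw [h2]
      exact h1.le
  exact hmain.congr' (heq.mono fun i h => h.symm)
end

section
/- Let G be a countably based infinite pro-p group with a filtration series S: G = G_0 ⊇ G_1 ⊇ … and closed subgroups K ≤ H ≤ G. If K has strong Hausdorff dimension in H with respect to the induced filtration S|_H : H ∩ G_i, then hdim^S_G(K) = hdim^S_G(H) · hdim^{S|_H}_H(K). -/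
/-!
Intersecting with the normal subgroup `G_i`, the second isomorphism theorem gives
`|K G_i : G_i| = |K : K ∩ G_i| = |K (H ∩ G_i) : H ∩ G_i|` and `|H G_i : G_i| = |H : H ∩ G_i|`,
so at every level the logarithmic index ratio of `K` in `G` factors as the ratio of `H` in `G`
times the ratio of `K` in `H`. The first factor lies in `[0, 1]` and the second converges,
and the lower limit of such a product is the product of the lower limits.
-/

open Filter

lemma div_eq_div_mul_div_of_eq_zero {a e d : ℝ} (h : e = 0 → a = 0 ∨ d = 0) :
    a / d = e / d * (a / e) := by
  rcases eq_or_ne e 0 with rfl | he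
  · rcases h rfl with rfl | rfl <;> simp
  · rw [mul_comm, div_mul_div_cancel₀ he]

lemma Real.log_natCast_div_log_eq_mul_of_dvd {a e d : ℕ} (hed : e ∣ d) (ha : e = 1 → a = 1) :
    Real.log a / Real.log d = Real.log e / Real.log d * (Real.log a / Real.log e) := by
  refine div_eq_div_mul_div_of_eq_zero fun he => ?_
  rcases Real.log_eq_zero.mp he with he | he | he
  · right
    obtain rfl : e = 0 := Nat.cast_eq_zero.mp he
    simp [Nat.eq_zero_of_zero_dvd hed]
  · left
    simp [ha (mod_cast he)]
  · linarith [he ▸ (Nat.cast_nonneg e : (0 : ℝ) ≤ e)]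

lemma Real.log_natCast_div_log_le_one_of_dvd {e d : ℕ} (hed : e ∣ d) :
    Real.log e / Real.log d ≤ 1 := by
  rcases eq_or_ne d 0 with rfl | hd
  · simp
  · have he : 0 < e := Nat.pos_of_dvd_of_pos hed (Nat.pos_of_ne_zero hd)
    refine div_le_one_of_le₀ (Real.log_le_log (by positivity) ?_) (Real.log_natCast_nonneg d)
    exact_mod_cast Nat.le_of_dvd (Nat.pos_of_ne_zero hd) hed

lemma liminf_mul_eq_of_tendsto {ι : Type*} {f : Filter ι} [f.NeBot] {u v : ι → ℝ} {a : ℝ}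
    (hu : Tendsto u f (nhds a)) (hu0 : 0 ≤ᶠ[f] u) (hv0 : 0 ≤ᶠ[f] v)
    (hv : IsBoundedUnder (· ≤ ·) f v) :
    liminf (fun i => v i * u i) f = liminf v f * a := by
  have hvu : (fun i => v i * u i) = u * v := funext fun i => mul_comm _ _
  rw [hvu, mul_comm (liminf v f) a]
  apply le_antisymm
  · simpa only [hu.limsup_eq] using
      liminf_mul_le hu0 hu.isBoundedUnder_le hv0 hv.isCoboundedUnder_ge
  · simpa only [hu.liminf_eq] using
      le_liminf_mul hu0 hu.isBoundedUnder_le hv0 hv.isCoboundedUnder_ge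

namespace Subgroup

variable {G : Type*} [Group G]

lemma relIndex_inf_sup_of_le {K H : Subgroup G} (N : Subgroup G) [N.Normal] (hKH : K ≤ H) :
    (H ⊓ N).relIndex (K ⊔ (H ⊓ N)) = N.relIndex K := by
  have hle : K ⊔ (H ⊓ N) ≤ H := sup_le hKH inf_le_left
  have hN : (H ⊓ N).subgroupOf H = N.subgroupOf H := by
    rw [inf_comm, inf_subgroupOf_right]
  calc (H ⊓ N).relIndex (K ⊔ (H ⊓ N))
      = ((H ⊓ N).subgroupOf H).relIndex ((K ⊔ (H ⊓ N)).subgroupOf H) :=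
        (relIndex_subgroupOf hle).symm
    _ = (N.subgroupOf H).relIndex (K.subgroupOf H ⊔ N.subgroupOf H) := by
        rw [subgroupOf_sup hKH inf_le_left, hN]
    _ = (N.subgroupOf H).relIndex (K.subgroupOf H) := relIndex_sup_right _ _
    _ = N.relIndex K := relIndex_subgroupOf hKH

lemma log_relIndex_sup_div_log_index_eq_mul {K H : Subgroup G} (N : Subgroup G) [N.Normal]
    (hKH : K ≤ H) :
    Real.log (N.relIndex (K ⊔ N)) / Real.log N.index =
      Real.log (N.relIndex (H ⊔ N)) / Real.log N.index *
        (Real.log ((H ⊓ N).relIndex (K ⊔ (H ⊓ N))) / Real.log (N.relIndex H)) := by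
  rw [relIndex_sup_right, relIndex_sup_right, relIndex_inf_sup_of_le N hKH]
  refine Real.log_natCast_div_log_eq_mul_of_dvd (relIndex_dvd_index_of_normal N H) fun h => ?_
  exact relIndex_eq_one.mpr (hKH.trans (relIndex_eq_one.mp h))

lemma log_relIndex_sup_div_log_index_le_one (H N : Subgroup G) [N.Normal] :
    Real.log (N.relIndex (H ⊔ N)) / Real.log N.index ≤ 1 := by
  rw [relIndex_sup_right]
  exact Real.log_natCast_div_log_le_one_of_dvd (relIndex_dvd_index_of_normal N H)

end Subgroup

theorem stmt9_general
    (G : Type*) [Group G]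
    (S : ℕ → Subgroup G) (hnorm : ∀ i, (S i).Normal)
    (K H : Subgroup G) (hKH : K ≤ H)
    -- `K` has strong Hausdorff dimension in `H` w.r.t. `S|_H`:
    (hstrong : Tendsto
      (fun i : ℕ => Real.log (((H ⊓ S i).relIndex (K ⊔ (H ⊓ S i)) : ℕ)) /
        Real.log (((S i).relIndex H : ℕ))) atTop
      (nhds (liminf
        (fun i : ℕ => Real.log (((H ⊓ S i).relIndex (K ⊔ (H ⊓ S i)) : ℕ)) /
          Real.log (((S i).relIndex H : ℕ))) atTop))) :
    liminf (fun i : ℕ =>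
        Real.log (((S i).relIndex (K ⊔ S i) : ℕ)) / Real.log (((S i).index : ℕ))) atTop =
      liminf (fun i : ℕ =>
          Real.log (((S i).relIndex (H ⊔ S i) : ℕ)) / Real.log (((S i).index : ℕ))) atTop *
      liminf (fun i : ℕ =>
          Real.log (((H ⊓ S i).relIndex (K ⊔ (H ⊓ S i)) : ℕ)) /
            Real.log (((S i).relIndex H : ℕ))) atTop := by
  have hratio_nonneg (a b : ℕ) : 0 ≤ Real.log a / Real.log b :=
    div_nonneg (Real.log_natCast_nonneg a) (Real.log_natCast_nonneg b)
  simp only [fun i => haveI := hnorm i; Subgroup.log_relIndex_sup_div_log_index_eq_mul (S i) hKH]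
  refine liminf_mul_eq_of_tendsto hstrong (.of_forall fun i => hratio_nonneg _ _)
    (.of_forall fun i => hratio_nonneg _ _) (isBoundedUnder_of_eventually_le (a := 1) ?_)
  exact .of_forall fun i => haveI := hnorm i; Subgroup.log_relIndex_sup_div_log_index_le_one H (S i)

/-- Let `G` be a countably based infinite pro-`p` group (a compact,
totally disconnected, second countable topological group in which every open
subgroup has `p`-power index) with a filtration series `S` of open normal subgroups
with trivial intersection, and let `K ≤ H ≤ G` be closed subgroups.  If `K` has
strong Hausdorff dimension in `H` with respect to the induced filtration
`S|_H : H ∩ G_i`, then `hdim^S_G(K) = hdim^S_G(H) · hdim^{S|_H}_H(K)`.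

Here `hdim` is the lower limit of the quotients of logarithmic indices. -/
theorem stmt9 (p : ℕ) (hp : p.Prime)
    (G : Type*) [Group G] [TopologicalSpace G] [IsTopologicalGroup G]
    [CompactSpace G] [TotallyDisconnectedSpace G]
    [SecondCountableTopology G] [Infinite G]
    (hpro : ∀ U : Subgroup G, IsOpen ((U : Set G)) → ∃ n : ℕ, U.index = p ^ n)
    (S : ℕ → Subgroup G) (hS0 : S 0 = ⊤) (hanti : Antitone S)
    (hopen : ∀ i, IsOpen ((S i : Set G))) (hnorm : ∀ i, (S i).Normal)
    (hint : ⨅ i, S i = ⊥)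
    (K H : Subgroup G) (hKH : K ≤ H)
    (hKcl : IsClosed ((K : Set G))) (hHcl : IsClosed ((H : Set G)))
    -- `K` has strong Hausdorff dimension in `H` w.r.t. `S|_H`:
    (hstrong : Tendsto
      (fun i : ℕ => Real.log (((H ⊓ S i).relIndex (K ⊔ (H ⊓ S i)) : ℕ)) /
        Real.log (((S i).relIndex H : ℕ))) atTop
      (nhds (liminf
        (fun i : ℕ => Real.log (((H ⊓ S i).relIndex (K ⊔ (H ⊓ S i)) : ℕ)) /
          Real.log (((S i).relIndex H : ℕ))) atTop))) :
    liminf (fun i : ℕ =>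
        Real.log (((S i).relIndex (K ⊔ S i) : ℕ)) / Real.log (((S i).index : ℕ))) atTop =
      liminf (fun i : ℕ =>
          Real.log (((S i).relIndex (H ⊔ S i) : ℕ)) / Real.log (((S i).index : ℕ))) atTop *
      liminf (fun i : ℕ =>
          Real.log (((H ⊓ S i).relIndex (K ⊔ (H ⊓ S i)) : ℕ)) /
            Real.log (((S i).relIndex H : ℕ))) atTop :=
  stmt9_general G S hnorm K H hKH hstrong
end

section
/- Let G be a countably based infinite pro-p group with filtration series S: G = G_0 ⊇ G_1 ⊇ …, a closed normal subgroup N and a closed subgroup H. Suppose N has strong Hausdorff dimension ξ = hdim^S_G(N). Then hdim^S_G(H) ≥ (1−ξ)·hdim^{S|_{G/N}}_{G/N}(HN/N) + ξ·liminf_{i→∞} log_p|H G_i ∩ N : G_i ∩ N| / log_p|N : G_i ∩ N|, with equality if HN/N has strong Hausdorff dimension in G/N with respect to the induced filtration G_i N/N. -/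
/-!
Write `Gᵢ = S i`. Multiplicativity of the index along `Gᵢ ≤ (N ∩ HGᵢ)Gᵢ ≤ HGᵢ` gives
`log |HGᵢ : Gᵢ| = log |HGᵢ ∩ N : Gᵢ ∩ N| + log |HNGᵢ : NGᵢ|`, while
`log |G : Gᵢ| = log |N : Gᵢ ∩ N| + log |G : NGᵢ|`. Hence the index ratio of `H` is a combination of
the ratios for `HN/N` in `G/N` and for `H` inside `N`, with weights `log |G : NGᵢ| / log |G : Gᵢ|`
and `log |N : Gᵢ ∩ N| / log |G : Gᵢ|`, which tend to `1 - ξ` and `ξ` because `N` has strong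
dimension `ξ`. All ratios lie in `[0, 1]`, so the `liminf` of the combination is at least the
combination of the `liminf`s, with equality as soon as one of the two ratios converges.
-/

open Filter Real Topology

namespace Subgroup

variable {G : Type*} [Group G]

theorem sup_inf_eq_inf_sup_of_le (M N K : Subgroup G) [M.Normal] (hMK : M ≤ K) :
    (N ⊔ M) ⊓ K = (N ⊓ K) ⊔ M :=
  SetLike.coe_injective <| by
    rw [coe_inf, mul_normal, mul_normal, inf_comm, inf_mul_assoc K N M hMK, Set.inter_comm]

/-- Splits `|HM : M|` through the intermediate subgroup `(N ∩ HM)M`. -/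
theorem relIndex_sup_eq_mul (M N H : Subgroup G) [M.Normal] [N.Normal] :
    M.relIndex (H ⊔ M) =
      (M ⊓ N).relIndex ((H ⊔ M) ⊓ N) * (N ⊔ M).relIndex (H ⊔ N ⊔ M) := by
  have hMK : M ≤ H ⊔ M := le_sup_right
  have hlower : M.relIndex ((N ⊓ (H ⊔ M)) ⊔ M) = (M ⊓ N).relIndex ((H ⊔ M) ⊓ N) := by
    rw [relIndex_sup_right, inf_comm N, ← inf_relIndex_right M, ← inf_assoc,
      inf_eq_left.mpr hMK]
  have hupper : ((N ⊓ (H ⊔ M)) ⊔ M).relIndex (H ⊔ M) = (N ⊔ M).relIndex (H ⊔ N ⊔ M) := by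
    have hsup : H ⊔ N ⊔ M = (H ⊔ M) ⊔ (N ⊔ M) := by
      rw [sup_sup_sup_comm, sup_idem, sup_right_comm]
    rw [hsup, relIndex_sup_right, ← inf_relIndex_right (N ⊔ M),
      sup_inf_eq_inf_sup_of_le M N _ hMK]
  rw [← hlower, ← hupper,
    relIndex_mul_relIndex _ _ _ le_sup_right (sup_le inf_le_right hMK)]

theorem relIndex_inf_sup_inf_dvd (M N H : Subgroup G) :
    (M ⊓ N).relIndex ((H ⊔ M) ⊓ N) ∣ M.relIndex N := by
  rw [← inf_relIndex_right M N]
  exact Dvd.intro _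
    (relIndex_mul_relIndex _ _ _ (inf_le_inf_right N le_sup_right) inf_le_right)

theorem relIndex_mul_index_sup (M N : Subgroup G) [M.Normal] :
    M.relIndex N * (N ⊔ M).index = M.index := by
  rw [← relIndex_sup_right N M, relIndex_mul_index le_sup_right]

theorem relIndex_ne_zero_of_index_ne_zero (M N : Subgroup G) [M.Normal] (hM : M.index ≠ 0) :
    M.relIndex N ≠ 0 :=
  left_ne_zero_of_mul (relIndex_mul_index_sup M N ▸ hM)

theorem index_sup_ne_zero (M N : Subgroup G) [M.Normal] (hM : M.index ≠ 0) :
    (N ⊔ M).index ≠ 0 :=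
  right_ne_zero_of_mul (relIndex_mul_index_sup M N ▸ hM)

end Subgroup

theorem Antitone.eventually_ne_top {ι α : Type*} [Preorder ι] [CompleteLattice α] [Nontrivial α]
    {S : ι → α} (hS : Antitone S) (hbot : ⨅ i, S i = ⊥) : ∀ᶠ i in atTop, S i ≠ ⊤ := by
  obtain ⟨i₀, hi₀⟩ : ∃ i₀, S i₀ ≠ ⊤ := by
    by_contra! h
    simp [h] at hbot
  exact (eventually_ge_atTop i₀).mono fun i hi => ne_top_of_le_ne_top hi₀ (hS hi)

theorem log_div_log_nonneg (a b : ℕ) : 0 ≤ log a / log b :=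
  div_nonneg (log_natCast_nonneg a) (log_natCast_nonneg b)

theorem log_div_log_le_one {a b : ℕ} (hab : a ∣ b) (hb : b ≠ 0) : log a / log b ≤ 1 := by
  have ha : 0 < a := Nat.pos_of_dvd_of_pos hab (Nat.pos_of_ne_zero hb)
  exact div_le_one_of_le₀ (log_le_log (by exact_mod_cast ha)
    (by exact_mod_cast Nat.le_of_dvd (Nat.pos_of_ne_zero hb) hab)) (log_natCast_nonneg b)

/-- The cancellation is harmless even when `log b = 0`: then `b = 1`, so `a = 1`. -/
theorem log_div_log_mul_log_div_log {a b : ℕ} (c : ℕ) (hab : a ∣ b) (hb0 : b ≠ 0) :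
    log a / log b * (log b / log c) = log a / log c := by
  rcases eq_or_ne b 1 with rfl | hb
  · simp [Nat.dvd_one.mp hab]
  have : (1 : ℝ) < b := by exact_mod_cast Nat.one_lt_iff_ne_zero_and_ne_one.2 ⟨hb0, hb⟩
  rw [div_mul_div_cancel₀ (log_pos this).ne']

theorem log_mul_div_log_eq_add {c d e f : ℕ} (b : ℕ) (hcf : c ∣ f) (hde : d ∣ e)
    (hf : f ≠ 0) (he : e ≠ 0) :
    log ↑(c * d) / log b = log e / log b * (log d / log e) + log f / log b * (log c / log f) := by
  have hc : c ≠ 0 := ne_zero_of_dvd_ne_zero hf hcf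
  have hd : d ≠ 0 := ne_zero_of_dvd_ne_zero he hde
  rw [mul_comm (log e / log b), mul_comm (log f / log b),
    log_div_log_mul_log_div_log b hde he, log_div_log_mul_log_div_log b hcf hf,
    Nat.cast_mul, log_mul (by exact_mod_cast hc) (by exact_mod_cast hd), add_div, add_comm]

section Liminf

variable {ι : Type*} {l : Filter ι} [l.NeBot] {x z u v : ι → ℝ} {α β : ℝ}

theorem liminf_mul_eq_of_tendsto_s10 (hu0 : 0 ≤ᶠ[l] u) (hu : Tendsto u l (𝓝 α)) (hx0 : 0 ≤ᶠ[l] x)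
    (hx : IsBoundedUnder (· ≤ ·) l x) : liminf (u * x) l = α * liminf x l := by
  apply le_antisymm
  · simpa only [hu.limsup_eq]
      using liminf_mul_le hu0 hu.isBoundedUnder_le hx0 hx.isCoboundedUnder_ge
  · simpa only [hu.liminf_eq, mul_comm x u, mul_comm α]
      using le_liminf_mul hx0 hx hu0 hu.isBoundedUnder_le.isCoboundedUnder_ge

theorem le_liminf_mul_add_mul (hu0 : 0 ≤ᶠ[l] u) (hu : Tendsto u l (𝓝 α)) (hv0 : 0 ≤ᶠ[l] v)
    (hv : Tendsto v l (𝓝 β)) (hx0 : 0 ≤ᶠ[l] x) (hx : IsBoundedUnder (· ≤ ·) l x)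
    (hz0 : 0 ≤ᶠ[l] z) (hz : IsBoundedUnder (· ≤ ·) l z) :
    α * liminf x l + β * liminf z l ≤ liminf (u * x + v * z) l := by
  rw [← liminf_mul_eq_of_tendsto_s10 hu0 hu hx0 hx, ← liminf_mul_eq_of_tendsto_s10 hv0 hv hz0 hz]
  exact le_liminf_add (isBoundedUnder_of_eventually_ge (hu0.mul_nonneg hx0))
    (isBoundedUnder_le_mul_of_nonneg hu0.frequently hu.isBoundedUnder_le hx0 hx)
    (isBoundedUnder_of_eventually_ge (hv0.mul_nonneg hz0))
    (isBoundedUnder_le_mul_of_nonneg hv0.frequently hv.isBoundedUnder_le hz0 hz).isCoboundedUnder_ge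

theorem liminf_mul_add_mul_eq {X : ℝ} (hu0 : 0 ≤ᶠ[l] u) (hu : Tendsto u l (𝓝 α))
    (hv0 : 0 ≤ᶠ[l] v) (hv : Tendsto v l (𝓝 β)) (hx0 : 0 ≤ᶠ[l] x) (hx : Tendsto x l (𝓝 X))
    (hz0 : 0 ≤ᶠ[l] z) (hz : IsBoundedUnder (· ≤ ·) l z) :
    liminf (u * x + v * z) l = α * X + β * liminf z l := by
  refine le_antisymm ?_ <| hx.liminf_eq ▸
    le_liminf_mul_add_mul hu0 hu hv0 hv hx0 hx.isBoundedUnder_le hz0 hz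
  rw [← (hu.mul hx).limsup_eq, ← liminf_mul_eq_of_tendsto_s10 hv0 hv hz0 hz]
  exact liminf_add_le (isBoundedUnder_of_eventually_ge (hu0.mul_nonneg hx0))
    (hu.mul hx).isBoundedUnder_le (isBoundedUnder_of_eventually_ge (hv0.mul_nonneg hz0))
    (isBoundedUnder_le_mul_of_nonneg hv0.frequently hv.isBoundedUnder_le hz0 hz).isCoboundedUnder_ge

end Liminf

namespace Subgroup

variable {G : Type*} [Group G]

theorem log_relIndex_sup_div_log_index (M N H : Subgroup G) [M.Normal] [N.Normal]
    (hM : M.index ≠ 0) :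
    log (M.relIndex (H ⊔ M)) / log M.index =
      log (N ⊔ M).index / log M.index *
          (log ((N ⊔ M).relIndex (H ⊔ N ⊔ M)) / log (N ⊔ M).index) +
        log (M.relIndex N) / log M.index *
          (log ((M ⊓ N).relIndex ((H ⊔ M) ⊓ N)) / log (M.relIndex N)) := by
  rw [relIndex_sup_eq_mul M N H]
  exact log_mul_div_log_eq_add _ (relIndex_inf_sup_inf_dvd M N H)
    (relIndex_dvd_index_of_normal (N ⊔ M) (H ⊔ N ⊔ M))
    (relIndex_ne_zero_of_index_ne_zero M N hM) (index_sup_ne_zero M N hM)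

theorem log_index_sup_div_log_index (M N : Subgroup G) [M.Normal] (hM : 1 < M.index) :
    log (N ⊔ M).index / log M.index = 1 - log (M.relIndex N) / log M.index := by
  have hM0 : M.index ≠ 0 := (zero_lt_one.trans hM).ne'
  have hlog : log M.index ≠ 0 := (log_pos (by exact_mod_cast hM)).ne'
  rw [eq_sub_iff_add_eq', ← add_div, div_eq_one_iff_eq hlog, ← log_mul, ← Nat.cast_mul,
    relIndex_mul_index_sup]
  · exact_mod_cast relIndex_ne_zero_of_index_ne_zero M N hM0
  · exact_mod_cast index_sup_ne_zero M N hM0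

theorem liminf_log_relIndex_sup_div_log_index {ι : Type*} {l : Filter ι} [l.NeBot]
    (S : ι → Subgroup G) [∀ i, (S i).Normal] (N H : Subgroup G) [N.Normal] {ξ : ℝ}
    (hfin : ∀ i, (S i).index ≠ 0) (hlarge : ∀ᶠ i in l, 1 < (S i).index)
    (hN : Tendsto (fun i => log ((S i).relIndex N) / log (S i).index) l (𝓝 ξ)) :
    (liminf (fun i => log ((S i).relIndex (H ⊔ S i)) / log (S i).index) l ≥
      (1 - ξ) * liminf (fun i =>
          log ((N ⊔ S i).relIndex (H ⊔ N ⊔ S i)) / log (N ⊔ S i).index) l +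
        ξ * liminf (fun i =>
          log ((S i ⊓ N).relIndex ((H ⊔ S i) ⊓ N)) / log ((S i).relIndex N)) l) ∧
    (Tendsto (fun i => log ((N ⊔ S i).relIndex (H ⊔ N ⊔ S i)) / log (N ⊔ S i).index) l
        (𝓝 (liminf (fun i =>
          log ((N ⊔ S i).relIndex (H ⊔ N ⊔ S i)) / log (N ⊔ S i).index) l)) →
      liminf (fun i => log ((S i).relIndex (H ⊔ S i)) / log (S i).index) l =
        (1 - ξ) * liminf (fun i =>
            log ((N ⊔ S i).relIndex (H ⊔ N ⊔ S i)) / log (N ⊔ S i).index) l +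
          ξ * liminf (fun i =>
            log ((S i ⊓ N).relIndex ((H ⊔ S i) ⊓ N)) / log ((S i).relIndex N)) l) := by
  have hNG : Tendsto (fun i => log (N ⊔ S i).index / log (S i).index) l (𝓝 (1 - ξ)) :=
    (tendsto_const_nhds.sub hN).congr'
      (hlarge.mono fun i hi => (log_index_sup_div_log_index (S i) N hi).symm)
  have hsplit : (fun i => log ((S i).relIndex (H ⊔ S i)) / log (S i).index) =
      (fun i => log (N ⊔ S i).index / log (S i).index) *
          (fun i => log ((N ⊔ S i).relIndex (H ⊔ N ⊔ S i)) / log (N ⊔ S i).index) +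
        (fun i => log ((S i).relIndex N) / log (S i).index) *
          (fun i => log ((S i ⊓ N).relIndex ((H ⊔ S i) ⊓ N)) / log ((S i).relIndex N)) :=
    funext fun i => log_relIndex_sup_div_log_index (S i) N H (hfin i)
  have hquot : IsBoundedUnder (· ≤ ·) l
      fun i => log ((N ⊔ S i).relIndex (H ⊔ N ⊔ S i)) / log (N ⊔ S i).index :=
    isBoundedUnder_of_eventually_le <| .of_forall fun i =>
      log_div_log_le_one (relIndex_dvd_index_of_normal _ _) (index_sup_ne_zero _ N (hfin i))
  have hsub : IsBoundedUnder (· ≤ ·) l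
      fun i => log ((S i ⊓ N).relIndex ((H ⊔ S i) ⊓ N)) / log ((S i).relIndex N) :=
    isBoundedUnder_of_eventually_le <| .of_forall fun i =>
      log_div_log_le_one (relIndex_inf_sup_inf_dvd _ N H)
        (relIndex_ne_zero_of_index_ne_zero _ N (hfin i))
  have hnonneg {a b : ι → ℕ} : 0 ≤ᶠ[l] fun i => log (a i) / log (b i) :=
    .of_forall fun i => log_div_log_nonneg (a i) (b i)
  rw [hsplit]
  exact ⟨le_liminf_mul_add_mul hnonneg hNG hnonneg hN hnonneg hquot hnonneg hsub,
    fun hconv => liminf_mul_add_mul_eq hnonneg hNG hnonneg hN hnonneg hconv hnonneg hsub⟩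

end Subgroup

theorem stmt10_general
    (G : Type*) [Group G] [TopologicalSpace G] [IsTopologicalGroup G]
    [CompactSpace G] [Infinite G]
    (S : ℕ → Subgroup G) (hanti : Antitone S)
    (hopen : ∀ i, IsOpen ((S i : Set G))) (hnorm : ∀ i, (S i).Normal)
    (hint : ⨅ i, S i = ⊥)
    (N H : Subgroup G) [N.Normal]
    (ξ : ℝ)
    -- `N` has strong Hausdorff dimension `ξ` in `G` w.r.t. `S`:
    (hstrongN : Tendsto (fun i : ℕ =>
        Real.log (((S i).relIndex (N ⊔ S i) : ℕ)) / Real.log (((S i).index : ℕ)))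
      atTop (nhds ξ)) :
    (liminf (fun i : ℕ =>
        Real.log (((S i).relIndex (H ⊔ S i) : ℕ)) / Real.log (((S i).index : ℕ))) atTop ≥
      (1 - ξ) * liminf (fun i : ℕ =>
          Real.log (((N ⊔ S i).relIndex (H ⊔ N ⊔ S i) : ℕ)) /
            Real.log (((N ⊔ S i).index : ℕ))) atTop +
      ξ * liminf (fun i : ℕ =>
          Real.log (((S i ⊓ N).relIndex ((H ⊔ S i) ⊓ N) : ℕ)) /
            Real.log (((S i).relIndex N : ℕ))) atTop) ∧
    -- equality if `HN/N` has strong Hausdorff dimension in `G/N` w.r.t. `S|_{G/N}`: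
    (Tendsto (fun i : ℕ =>
        Real.log (((N ⊔ S i).relIndex (H ⊔ N ⊔ S i) : ℕ)) /
          Real.log (((N ⊔ S i).index : ℕ))) atTop
      (nhds (liminf (fun i : ℕ =>
        Real.log (((N ⊔ S i).relIndex (H ⊔ N ⊔ S i) : ℕ)) /
          Real.log (((N ⊔ S i).index : ℕ))) atTop)) →
      liminf (fun i : ℕ =>
        Real.log (((S i).relIndex (H ⊔ S i) : ℕ)) / Real.log (((S i).index : ℕ))) atTop =
      (1 - ξ) * liminf (fun i : ℕ =>
          Real.log (((N ⊔ S i).relIndex (H ⊔ N ⊔ S i) : ℕ)) /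
            Real.log (((N ⊔ S i).index : ℕ))) atTop +
      ξ * liminf (fun i : ℕ =>
          Real.log (((S i ⊓ N).relIndex ((H ⊔ S i) ⊓ N) : ℕ)) /
            Real.log (((S i).relIndex N : ℕ))) atTop) := by
  have := hnorm
  have hfin (i : ℕ) : Finite (G ⧸ S i) := Subgroup.quotient_finite_of_isOpen _ (hopen i)
  have hlarge : ∀ᶠ i in atTop, 1 < (S i).index :=
    (hanti.eventually_ne_top hint).mono fun _ => Subgroup.one_lt_index_of_ne_top
  simp only [Subgroup.relIndex_sup_right] at hstrongN
  exact Subgroup.liminf_log_relIndex_sup_div_log_index S N H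
    (fun _ => Subgroup.index_ne_zero_of_finite) hlarge hstrongN

/-- Let `G` be a countably based infinite pro-`p` group with filtration
series `S`, `N` a closed normal subgroup with strong Hausdorff dimension
`ξ = hdim^S_G(N)`, and `H` a closed subgroup.  Then
`hdim^S_G(H) ≥ (1−ξ)·hdim^{S|_{G/N}}_{G/N}(HN/N) + ξ·liminf_i log|H G_i ∩ N : G_i ∩ N|/log|N : G_i ∩ N|`,
with equality if `HN/N` has strong Hausdorff dimension in `G/N`.

All quantities are expressed inside `G`:
`|HN·G_iN : G_iN| = (N ⊔ S i).relIndex (H ⊔ N ⊔ S i)`, `|G : G_i N| = (N ⊔ S i).index`,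
`|H G_i ∩ N : G_i ∩ N| = (S i ⊓ N).relIndex ((H ⊔ S i) ⊓ N)`,
`|N : G_i ∩ N| = (S i).relIndex N`. -/
theorem stmt10 (p : ℕ) (hp : p.Prime)
    (G : Type*) [Group G] [TopologicalSpace G] [IsTopologicalGroup G]
    [CompactSpace G] [TotallyDisconnectedSpace G]
    [SecondCountableTopology G] [Infinite G]
    (hpro : ∀ U : Subgroup G, IsOpen ((U : Set G)) → ∃ n : ℕ, U.index = p ^ n)
    (S : ℕ → Subgroup G) (hS0 : S 0 = ⊤) (hanti : Antitone S)
    (hopen : ∀ i, IsOpen ((S i : Set G))) (hnorm : ∀ i, (S i).Normal)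
    (hint : ⨅ i, S i = ⊥)
    (N H : Subgroup G) [N.Normal]
    (hNcl : IsClosed ((N : Set G))) (hHcl : IsClosed ((H : Set G)))
    (ξ : ℝ)
    -- `N` has strong Hausdorff dimension `ξ` in `G` w.r.t. `S`:
    (hstrongN : Tendsto (fun i : ℕ =>
        Real.log (((S i).relIndex (N ⊔ S i) : ℕ)) / Real.log (((S i).index : ℕ)))
      atTop (nhds ξ)) :
    (liminf (fun i : ℕ =>
        Real.log (((S i).relIndex (H ⊔ S i) : ℕ)) / Real.log (((S i).index : ℕ))) atTop ≥
      (1 - ξ) * liminf (fun i : ℕ =>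
          Real.log (((N ⊔ S i).relIndex (H ⊔ N ⊔ S i) : ℕ)) /
            Real.log (((N ⊔ S i).index : ℕ))) atTop +
      ξ * liminf (fun i : ℕ =>
          Real.log (((S i ⊓ N).relIndex ((H ⊔ S i) ⊓ N) : ℕ)) /
            Real.log (((S i).relIndex N : ℕ))) atTop) ∧
    -- equality if `HN/N` has strong Hausdorff dimension in `G/N` w.r.t. `S|_{G/N}`:
    (Tendsto (fun i : ℕ =>
        Real.log (((N ⊔ S i).relIndex (H ⊔ N ⊔ S i) : ℕ)) /
          Real.log (((N ⊔ S i).index : ℕ))) atTop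
      (nhds (liminf (fun i : ℕ =>
        Real.log (((N ⊔ S i).relIndex (H ⊔ N ⊔ S i) : ℕ)) /
          Real.log (((N ⊔ S i).index : ℕ))) atTop)) →
      liminf (fun i : ℕ =>
        Real.log (((S i).relIndex (H ⊔ S i) : ℕ)) / Real.log (((S i).index : ℕ))) atTop =
      (1 - ξ) * liminf (fun i : ℕ =>
          Real.log (((N ⊔ S i).relIndex (H ⊔ N ⊔ S i) : ℕ)) /
            Real.log (((N ⊔ S i).index : ℕ))) atTop +
      ξ * liminf (fun i : ℕ =>
          Real.log (((S i ⊓ N).relIndex ((H ⊔ S i) ⊓ N) : ℕ)) /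
            Real.log (((S i).relIndex N : ℕ))) atTop) :=
  stmt10_general G S hanti hopen hnorm hint N H ξ hstrongN
end

section
/- Let p be an odd prime, k ≥ 1, and let G_k be the group with the presentation above. Writing y_i = y^{x^i}, the elements w = y_{p^k−1} ⋯ y_1 y_0 and w′ = y_{p^k−1}^{−1} ⋯ y_1^{−1} y_0^{−1} have order p in G_k and lie in G_k^{p^k} ∩ Z(G_k). -/
/-- The free group on the two generators `x, y`. -/
abbrev Fr := FreeGroup (Fin 2)

/-- The generator `x`. -/
def xF : Fr := FreeGroup.of 0

/-- The generator `y`. -/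
def yF : Fr := FreeGroup.of 1

/-- `y_i = y^{x^i}`. -/
def yiF (i : ℕ) : Fr := (xF ^ i)⁻¹ * yF * xF ^ i

open scoped commutatorElement

/-- The relations of the presentation
`G_k = ⟨x, y ∣ x^{p^{k+1}}, y^{p^2}, [x^{p^k}, y], [y^p, x];
[y_0,y_i]^p, [y_0,y_i,x], [y_0,y_i,y] for 1 ≤ i ≤ (p^k−1)/2⟩`. -/
def relsK (p k : ℕ) : Set Fr :=
  {xF ^ p ^ (k + 1), yF ^ p ^ 2, ⁅xF ^ p ^ k, yF⁆, ⁅yF ^ p, xF⁆} ∪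
    ⋃ i ∈ Set.Icc 1 ((p ^ k - 1) / 2),
      {⁅yiF 0, yiF i⁆ ^ p, ⁅⁅yiF 0, yiF i⁆, xF⁆, ⁅⁅yiF 0, yiF i⁆, yF⁆}

/-- The finite `p`-group `G_k`, given by the presentation above. -/
abbrev Gk (p k : ℕ) := PresentedGroup (relsK p k)

/-- The image of `x` in `G_k`. -/
def xG (p k : ℕ) : Gk p k := PresentedGroup.of 0

/-- The image of `y` in `G_k`. -/
def yG (p k : ℕ) : Gk p k := PresentedGroup.of 1

/-- The image of `y_i = y^{x^i}` in `G_k`. -/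
def yiG (p k : ℕ) (i : ℕ) : Gk p k := (xG p k ^ i)⁻¹ * yG p k * xG p k ^ i

/-- `w = y_{p^k−1} ⋯ y_1 y_0` in `G_k`. -/
def wG (p k : ℕ) : Gk p k :=
  (((List.range (p ^ k)).reverse).map (fun i => yiG p k i)).prod

/-- `w' = y_{p^k−1}^{−1} ⋯ y_1^{−1} y_0^{−1}` in `G_k`. -/
def wG' (p k : ℕ) : Gk p k :=
  (((List.range (p ^ k)).reverse).map (fun i => (yiG p k i)⁻¹)).prod


namespace Stmt12Aux



open Subgroup

variable {G : Type*} [Group G]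

lemma central_commute {c : G} (hc : c ∈ Subgroup.center G) (g : G) : Commute c g :=
  ((Subgroup.mem_center_iff.mp hc) g).symm

lemma commutator_mul_left (u v z : G) : ⁅u * v, z⁆ = u * ⁅v, z⁆ * u⁻¹ * ⁅u, z⁆ := by
  simp only [commutatorElement_def]; group

lemma conj_eq_self_of_commute {c g : G} (h : Commute c g) : g⁻¹ * c * g = c := by
  rw [mul_assoc, h.eq, ← mul_assoc, inv_mul_cancel, one_mul]

lemma conj_pow' (g b : G) (m : ℕ) : (g⁻¹ * b * g) ^ m = g⁻¹ * b ^ m * g := by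
  induction m with
  | zero => simp
  | succ m ih => rw [pow_succ, ih, pow_succ]; group

lemma conj_commutator (g u v : G) : ⁅g⁻¹ * u * g, g⁻¹ * v * g⁆ = g⁻¹ * ⁅u, v⁆ * g := by
  simp only [commutatorElement_def]; group

lemma commutator_inv_inv' {u v : G} (h : ⁅u, v⁆ ∈ Subgroup.center G) : ⁅u⁻¹, v⁻¹⁆ = ⁅u, v⁆ := by
  have key : ⁅u⁻¹, v⁻¹⁆ = (v * u)⁻¹ * ⁅u, v⁆ * (v * u) := by
    simp only [commutatorElement_def]; group
  rw [key, conj_eq_self_of_commute (central_commute h _)]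

lemma swap_pow {u v c : G} (hcv : Commute c v) (h : v * u = c * (u * v)) :
    ∀ m : ℕ, v ^ m * u = c ^ m * (u * v ^ m) := by
  intro m
  induction m with
  | zero => simp
  | succ m ih =>
    calc v ^ (m+1) * u = v * (v ^ m * u) := by rw [pow_succ', mul_assoc]
      _ = v * (c ^ m * (u * v ^ m)) := by rw [ih]
      _ = (v * c ^ m) * (u * v ^ m) := by rw [mul_assoc]
      _ = (c ^ m * v) * (u * v ^ m) := by rw [((hcv.pow_left m).symm).eq]
      _ = c ^ m * ((v * u) * v ^ m) := by simp only [mul_assoc]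
      _ = c ^ m * ((c * (u * v)) * v ^ m) := by rw [h]
      _ = (c ^ m * c) * ((u * v) * v ^ m) := by simp only [mul_assoc]
      _ = c ^ (m+1) * (u * v ^ (m+1)) := by
          rw [← pow_succ c, mul_assoc u v (v ^ m), ← pow_succ' v]

lemma mul_pow_central {u v c : G} (hcu : Commute c u) (hcv : Commute c v)
    (h : v * u = c * (u * v)) :
    ∀ m : ℕ, (u * v) ^ m = u ^ m * v ^ m * c ^ (m.choose 2) := by
  intro m
  induction m with
  | zero => simp
  | succ m ih =>
    have hch : (m + 1).choose 2 = m.choose 2 + m := by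
      rw [Nat.choose_succ_succ]; simp [Nat.choose_one_right, Nat.add_comm]
    have hcm : Commute (c ^ m.choose 2) (u * v) := (hcu.mul_right hcv).pow_left _
    calc (u * v) ^ (m+1) = ((u ^ m * v ^ m) * c ^ m.choose 2) * (u * v) := by
          rw [pow_succ, ih]
      _ = (u ^ m * v ^ m) * (c ^ m.choose 2 * (u * v)) := by rw [mul_assoc]
      _ = (u ^ m * v ^ m) * ((u * v) * c ^ m.choose 2) := by rw [hcm.eq]
      _ = u ^ m * ((v ^ m * u) * (v * c ^ m.choose 2)) := by simp only [mul_assoc]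
      _ = u ^ m * ((c ^ m * (u * v ^ m)) * (v * c ^ m.choose 2)) := by
          rw [swap_pow hcv h m]
      _ = (u ^ m * c ^ m) * (u * ((v ^ m * v) * c ^ m.choose 2)) := by
          simp only [mul_assoc]
      _ = (c ^ m * u ^ m) * (u * (v ^ (m+1) * c ^ m.choose 2)) := by
          rw [(hcu.pow_pow m m).symm.eq, ← pow_succ v]
      _ = u ^ (m+1) * v ^ (m+1) * c ^ ((m+1).choose 2) := by
          have h2 : Commute (c ^ m) (u ^ m * (u * (v ^ (m+1) * c ^ m.choose 2))) :=
            ((hcu.pow_right m).mul_right (hcu.mul_right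
              ((hcv.pow_right (m+1)).mul_right ((Commute.refl c).pow_right _)))).pow_left m
          rw [hch, pow_add c, mul_assoc (c ^ m), h2.eq]
          simp only [pow_succ, mul_assoc]

section Word

variable (a c : G)

/-- `g i = (a^i)⁻¹ c a^i`. -/
def gfun (i : ℕ) : G := (a ^ i)⁻¹ * c * a ^ i

/-- `Wrd m = g (m-1) * ⋯ * g 1 * g 0`. -/
def Wrd (m : ℕ) : G := (((List.range m).reverse).map (gfun a c)).prod

lemma gfun_zero : gfun a c 0 = c := by simp [gfun]

lemma gfun_succ (i : ℕ) : gfun a c (i + 1) = a⁻¹ * gfun a c i * a := by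
  simp only [gfun, pow_succ, mul_inv_rev]; group

lemma gfun_add (i j : ℕ) : gfun a c (i + j) = (a ^ j)⁻¹ * gfun a c i * a ^ j := by
  simp only [gfun, pow_add, mul_inv_rev]; group

lemma Wrd_zero : Wrd a c 0 = 1 := rfl

lemma Wrd_succ (m : ℕ) : Wrd a c (m + 1) = gfun a c m * Wrd a c m := by
  simp [Wrd, List.range_succ]

lemma mul_pow_eq_Wrd (m : ℕ) : (a * c) ^ m = a ^ m * Wrd a c m := by
  induction m with
  | zero => simp [Wrd_zero]
  | succ m ih =>
    rw [pow_succ' (a * c), ih, Wrd_succ, ← mul_assoc, ← mul_assoc]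
    have key : a * c * a ^ m = a ^ (m + 1) * gfun a c m := by
      simp only [gfun, pow_succ']; group
    rw [key]

variable {a c}
variable {n p : ℕ}

lemma Wrd_commutator
    (hcent : ∀ i j, i < n → j < n → ⁅gfun a c i, gfun a c j⁆ ∈ Subgroup.center G)
    (hpw : ∀ i j, i < n → j < n → ⁅gfun a c i, gfun a c j⁆ ^ p = 1)
    {j m : ℕ} (hj : j < n) (hm : m ≤ n) :
    ⁅Wrd a c m, gfun a c j⁆ ∈ Subgroup.center G ∧ ⁅Wrd a c m, gfun a c j⁆ ^ p = 1 := by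
  induction m with
  | zero =>
    rw [Wrd_zero]
    constructor
    · simp only [commutatorElement_def, one_mul, inv_one, mul_one]
      rw [mul_inv_cancel]; exact one_mem _
    · simp only [commutatorElement_def, one_mul, inv_one, mul_one]
      rw [mul_inv_cancel, one_pow]
  | succ m ih =>
    obtain ⟨ihc, ihp⟩ := ih (Nat.le_of_succ_le hm)
    have hmn : m < n := Nat.lt_of_lt_of_le (Nat.lt_succ_self m) hm
    have hconj : gfun a c m * ⁅Wrd a c m, gfun a c j⁆ * (gfun a c m)⁻¹
        = ⁅Wrd a c m, gfun a c j⁆ := by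
      have h := conj_eq_self_of_commute (central_commute ihc (gfun a c m)⁻¹)
      rwa [inv_inv] at h
    rw [Wrd_succ, commutator_mul_left, hconj]
    constructor
    · exact mul_mem ihc (hcent m j hmn hj)
    · rw [(central_commute ihc _).mul_pow, ihp, hpw m j hmn hj, one_mul]

open scoped IsMulCommutative in
lemma Wrd_comm_g0 (hnpos : 0 < n) (hodd : Odd n)
    (hcent : ∀ i j, i < n → j < n → ⁅gfun a c i, gfun a c j⁆ ∈ Subgroup.center G)
    (hpair : ∀ i, 1 ≤ i → i < n →
      ⁅gfun a c i, gfun a c 0⁆ * ⁅gfun a c (n - i), gfun a c 0⁆ = 1) :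
    Commute (Wrd a c n) (gfun a c 0) := by
  classical
  set F : ℕ → Subgroup.center G := fun i =>
    if h : i < n then ⟨⁅gfun a c i, gfun a c 0⁆, hcent i 0 h hnpos⟩ else 1 with hF
  have Fval : ∀ i, i < n → (F i : G) = ⁅gfun a c i, gfun a c 0⁆ := by
    intro i hi; simp [hF, dif_pos hi]
  have key : ∀ m, m ≤ n →
      ⁅Wrd a c m, gfun a c 0⁆ = ((∏ i ∈ Finset.range m, F i : Subgroup.center G) : G) := by
    intro m
    induction m with
    | zero =>
      intro _
      rw [Wrd_zero]
      simp only [commutatorElement_def, one_mul, inv_one, mul_one, Finset.range_zero,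
        Finset.prod_empty, OneMemClass.coe_one]
      rw [mul_inv_cancel]
    | succ m ih =>
      intro hm
      have hmn : m < n := Nat.lt_of_lt_of_le (Nat.lt_succ_self m) hm
      have ihv := ih (Nat.le_of_succ_le hm)
      have hcen : ⁅Wrd a c m, gfun a c 0⁆ ∈ Subgroup.center G := by
        rw [ihv]; exact (∏ i ∈ Finset.range m, F i).2
      have hconj : gfun a c m * ⁅Wrd a c m, gfun a c 0⁆ * (gfun a c m)⁻¹
          = ⁅Wrd a c m, gfun a c 0⁆ := by
        have h := conj_eq_self_of_commute (central_commute hcen (gfun a c m)⁻¹)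
        rwa [inv_inv] at h
      rw [Wrd_succ, commutator_mul_left, hconj, ihv, Finset.prod_range_succ,
        Subgroup.coe_mul, Fval m hmn]
  have hprod : (∏ i ∈ Finset.range n, F i) = 1 := by
    rw [Finset.range_eq_Ico, Finset.prod_eq_prod_Ico_succ_bot hnpos]
    have hF0 : F 0 = 1 := by
      apply Subtype.ext
      rw [Fval 0 hnpos, commutatorElement_self]; rfl
    rw [hF0, one_mul]
    refine Finset.prod_involution (fun i _ => n - i) ?_ ?_ ?_ ?_
    · intro i hi
      rw [Finset.mem_Ico] at hi
      apply Subtype.ext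
      rw [Subgroup.coe_mul, Fval i hi.2, Fval (n - i) (by omega), OneMemClass.coe_one]
      exact hpair i hi.1 hi.2
    · intro i hi _
      rw [Finset.mem_Ico] at hi
      have h2 := Nat.odd_iff.mp hodd
      omega
    · intro i hi
      rw [Finset.mem_Ico] at hi ⊢
      omega
    · intro i hi
      rw [Finset.mem_Ico] at hi
      omega
  have := key n le_rfl
  rw [hprod] at this
  exact commutatorElement_eq_one_iff_commute.mp (by rw [this]; rfl)

lemma Wrd_conj (m : ℕ) : a⁻¹ * Wrd a c m * a = Wrd a c (m + 1) * (gfun a c 0)⁻¹ := by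
  induction m with
  | zero =>
    rw [Wrd_zero, Wrd_succ, Wrd_zero, mul_one, mul_one]
    group
  | succ m ih =>
    rw [Wrd_succ a c (m+1)]
    conv_lhs => rw [Wrd_succ a c m]
    have expand : a⁻¹ * (gfun a c m * Wrd a c m) * a
        = (a⁻¹ * gfun a c m * a) * (a⁻¹ * Wrd a c m * a) := by group
    rw [expand, ih, ← gfun_succ, ← mul_assoc]

lemma Wrd_comm_a (hgn : gfun a c n = gfun a c 0)
    (h0 : Commute (Wrd a c n) (gfun a c 0)) : Commute (Wrd a c n) a := by
  have h1 := Wrd_conj (a := a) (c := c) n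
  rw [Wrd_succ, hgn] at h1
  have h2 : a⁻¹ * Wrd a c n * a = Wrd a c n := by
    rw [h1, ← h0.eq]
    group
  have : Wrd a c n * a = a * Wrd a c n := by
    conv_lhs => rw [show Wrd a c n * a = a * (a⁻¹ * Wrd a c n * a) by group]
    rw [h2]
  exact this

lemma Wrd_pow (hpodd : Odd p)
    (hcent : ∀ i j, i < n → j < n → ⁅gfun a c i, gfun a c j⁆ ∈ Subgroup.center G)
    (hpw : ∀ i j, i < n → j < n → ⁅gfun a c i, gfun a c j⁆ ^ p = 1)
    (hgp : ∀ i, i < n → gfun a c i ^ p = c ^ p) :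
    ∀ m, m ≤ n → Wrd a c m ^ p = (c ^ p) ^ m := by
  intro m
  induction m with
  | zero => intro _; rw [Wrd_zero, one_pow, pow_zero]
  | succ m ih =>
    intro hm
    have hmn : m < n := Nat.lt_of_lt_of_le (Nat.lt_succ_self m) hm
    obtain ⟨hc, hp1⟩ := Wrd_commutator hcent hpw hmn (Nat.le_of_succ_le hm)
    have hvu : Wrd a c m * gfun a c m
        = ⁅Wrd a c m, gfun a c m⁆ * (gfun a c m * Wrd a c m) := by
      simp only [commutatorElement_def]; group
    have hmain := mul_pow_central (central_commute hc _) (central_commute hc _) hvu p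
    have hchoose : ⁅Wrd a c m, gfun a c m⁆ ^ p.choose 2 = 1 := by
      obtain ⟨t, rfl⟩ := hpodd
      have h2 : (2 * t + 1).choose 2 = (2 * t + 1) * t := by
        rw [Nat.choose_two_right]
        have e1 : 2 * t + 1 - 1 = 2 * t := by omega
        rw [e1]
        have e2 : (2 * t + 1) * (2 * t) = ((2 * t + 1) * t) * 2 := by ring
        rw [e2, Nat.mul_div_cancel _ (by norm_num)]
      rw [h2, pow_mul, hp1, one_pow]
    rw [Wrd_succ, hmain, hchoose, mul_one, ih (Nat.le_of_succ_le hm), hgp m hmn,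
      ← pow_succ' (c ^ p)]

end Word



section GkFacts

variable (p k : ℕ)

/-- The projection from the free group onto `G_k`. -/
def prj : Fr →* Gk p k := QuotientGroup.mk' _

lemma prj_x : prj p k xF = xG p k := rfl
lemma prj_y : prj p k yF = yG p k := rfl

lemma rel_one {r : Fr} (hr : r ∈ relsK p k) : prj p k r = 1 := by
  rw [show prj p k r = PresentedGroup.mk _ r from rfl, PresentedGroup.mk_eq_one_iff]
  exact Subgroup.subset_normalClosure hr

lemma prj_yiF (i : ℕ) : prj p k (yiF i) = yiG p k i := by
  simp only [yiF, yiG, map_mul, map_inv, map_pow, prj_x, prj_y]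

lemma relx : xG p k ^ p ^ (k + 1) = 1 := by
  have h := rel_one p k (show xF ^ p ^ (k+1) ∈ relsK p k from Or.inl (by simp))
  rwa [map_pow, prj_x] at h

lemma rely : yG p k ^ p ^ 2 = 1 := by
  have h := rel_one p k (show yF ^ p ^ 2 ∈ relsK p k from Or.inl (by simp))
  rwa [map_pow, prj_y] at h

lemma commxy : Commute (xG p k ^ p ^ k) (yG p k) := by
  have h := rel_one p k (show ⁅xF ^ p ^ k, yF⁆ ∈ relsK p k from Or.inl (by simp))
  rw [map_commutatorElement, map_pow, prj_x, prj_y] at h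
  exact commutatorElement_eq_one_iff_commute.mp h

lemma commyx : Commute (yG p k ^ p) (xG p k) := by
  have h := rel_one p k (show ⁅yF ^ p, xF⁆ ∈ relsK p k from Or.inl (by simp))
  rw [map_commutatorElement, map_pow, prj_x, prj_y] at h
  exact commutatorElement_eq_one_iff_commute.mp h

variable {i : ℕ}

lemma mem_relsK₁ (hi : i ∈ Set.Icc 1 ((p ^ k - 1) / 2)) :
    ⁅yiF 0, yiF i⁆ ^ p ∈ relsK p k :=
  Or.inr (Set.mem_biUnion hi (by simp))

lemma mem_relsK₂ (hi : i ∈ Set.Icc 1 ((p ^ k - 1) / 2)) :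
    ⁅⁅yiF 0, yiF i⁆, xF⁆ ∈ relsK p k :=
  Or.inr (Set.mem_biUnion hi (by simp))

lemma mem_relsK₃ (hi : i ∈ Set.Icc 1 ((p ^ k - 1) / 2)) :
    ⁅⁅yiF 0, yiF i⁆, yF⁆ ∈ relsK p k :=
  Or.inr (Set.mem_biUnion hi (by simp))

lemma relc1 (hi : i ∈ Set.Icc 1 ((p ^ k - 1) / 2)) :
    ⁅yiG p k 0, yiG p k i⁆ ^ p = 1 := by
  have h := rel_one p k (mem_relsK₁ p k hi)
  rwa [map_pow, map_commutatorElement, prj_yiF, prj_yiF] at h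

lemma relc2 (hi : i ∈ Set.Icc 1 ((p ^ k - 1) / 2)) :
    Commute ⁅yiG p k 0, yiG p k i⁆ (xG p k) := by
  have h := rel_one p k (mem_relsK₂ p k hi)
  rw [map_commutatorElement, map_commutatorElement, prj_yiF, prj_yiF, prj_x] at h
  exact commutatorElement_eq_one_iff_commute.mp h

lemma relc3 (hi : i ∈ Set.Icc 1 ((p ^ k - 1) / 2)) :
    Commute ⁅yiG p k 0, yiG p k i⁆ (yG p k) := by
  have h := rel_one p k (mem_relsK₃ p k hi)
  rw [map_commutatorElement, map_commutatorElement, prj_yiF, prj_yiF, prj_y] at h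
  exact commutatorElement_eq_one_iff_commute.mp h

lemma mem_center_of {g : Gk p k} (h0 : Commute g (xG p k)) (h1 : Commute g (yG p k)) :
    g ∈ Subgroup.center (Gk p k) := by
  rw [Subgroup.mem_center_iff]
  intro h
  have hh : h ∈ Subgroup.closure (Set.range (PresentedGroup.of : Fin 2 → Gk p k)) := by
    rw [PresentedGroup.closure_range_of]; exact Subgroup.mem_top h
  induction hh using Subgroup.closure_induction with
  | mem x hx =>
    obtain ⟨j, rfl⟩ := hx
    fin_cases j
    · exact h0.symm.eq
    · exact h1.symm.eq
  | one => rw [one_mul, mul_one]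
  | mul x y _ _ hx hy => rw [mul_assoc, hy, ← mul_assoc, hx, mul_assoc]
  | inv x _ hx =>
    have : Commute x g := hx
    exact this.inv_left.eq

/-- The commutator `c_d = [y_0, y_d]`. -/
def cI (d : ℕ) : Gk p k := ⁅yiG p k 0, yiG p k d⁆

lemma cI_center (hd : i ∈ Set.Icc 1 ((p ^ k - 1) / 2)) :
    cI p k i ∈ Subgroup.center (Gk p k) :=
  mem_center_of p k (relc2 p k hd) (relc3 p k hd)

lemma cI_pow (hd : i ∈ Set.Icc 1 ((p ^ k - 1) / 2)) : cI p k i ^ p = 1 :=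
  relc1 p k hd

lemma gfun_eq_yiG : gfun (xG p k) (yG p k) = yiG p k := rfl

lemma gfun_per (j : ℕ) :
    gfun (xG p k) (yG p k) (j + p ^ k) = gfun (xG p k) (yG p k) j := by
  rw [gfun_add]
  refine conj_eq_self_of_commute ?_
  refine Commute.symm ?_
  have h1 : Commute (xG p k ^ p ^ k) ((xG p k ^ j)⁻¹) :=
    ((Commute.refl (xG p k)).pow_pow _ _).inv_right
  have h2 : Commute (xG p k ^ p ^ k) (yG p k) := commxy p k
  have h3 : Commute (xG p k ^ p ^ k) (xG p k ^ j) := (Commute.refl (xG p k)).pow_pow _ _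
  exact (h1.mul_right h2).mul_right h3

lemma gfun_n : gfun (xG p k) (yG p k) (p ^ k) = gfun (xG p k) (yG p k) 0 := by
  have := gfun_per p k 0
  rwa [Nat.zero_add] at this

lemma comm_small (hd : i ∈ Set.Icc 1 ((p ^ k - 1) / 2)) (j : ℕ) :
    ⁅gfun (xG p k) (yG p k) j, gfun (xG p k) (yG p k) (i + j)⁆ = cI p k i := by
  have e1 : gfun (xG p k) (yG p k) j
      = (xG p k ^ j)⁻¹ * gfun (xG p k) (yG p k) 0 * xG p k ^ j := by
    have := gfun_add (xG p k) (yG p k) 0 j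
    rwa [Nat.zero_add] at this
  have e2 : gfun (xG p k) (yG p k) (i + j)
      = (xG p k ^ j)⁻¹ * gfun (xG p k) (yG p k) i * xG p k ^ j :=
    gfun_add (xG p k) (yG p k) i j
  rw [e1, e2, conj_commutator]
  exact conj_eq_self_of_commute (central_commute (cI_center p k hd) _)

variable (hp : p.Prime) (hodd : Odd p) (hk : 1 ≤ k)
include hp hodd hk

lemma npos : 0 < p ^ k := pow_pos hp.pos k

lemma nodd : Odd (p ^ k) := hodd.pow

lemma comm_le {j : ℕ} (hij : i ≤ j) (hj : j < p ^ k) :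
    ⁅gfun (xG p k) (yG p k) i, gfun (xG p k) (yG p k) j⁆ ∈ Subgroup.center (Gk p k) ∧
    ⁅gfun (xG p k) (yG p k) i, gfun (xG p k) (yG p k) j⁆ ^ p = 1 := by
  have hno := Nat.odd_iff.mp (nodd p k hp hodd hk)
  rcases Nat.eq_or_lt_of_le hij with rfl | hlt
  · rw [commutatorElement_self]
    exact ⟨one_mem _, one_pow p⟩
  · set d := j - i with hdd
    by_cases hsmall : d ≤ (p ^ k - 1) / 2
    · have hdIcc : d ∈ Set.Icc 1 ((p ^ k - 1) / 2) := ⟨by omega, hsmall⟩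
      have hji : j = d + i := by omega
      rw [hji, comm_small p k hdIcc i]
      exact ⟨cI_center p k hdIcc, cI_pow p k hdIcc⟩
    · set e := p ^ k - d with hee
      have heIcc : e ∈ Set.Icc 1 ((p ^ k - 1) / 2) := ⟨by omega, by omega⟩
      have key := comm_small p k heIcc j
      have hej : e + j = i + p ^ k := by omega
      rw [hej, gfun_per p k i] at key
      have flip : ⁅gfun (xG p k) (yG p k) i, gfun (xG p k) (yG p k) j⁆ = (cI p k e)⁻¹ := by
        rw [← key, commutatorElement_inv]
      rw [flip]
      exact ⟨inv_mem (cI_center p k heIcc), by rw [inv_pow, cI_pow p k heIcc, inv_one]⟩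

lemma comm_all {j : ℕ} (hi : i < p ^ k) (hj : j < p ^ k) :
    ⁅gfun (xG p k) (yG p k) i, gfun (xG p k) (yG p k) j⁆ ∈ Subgroup.center (Gk p k) ∧
    ⁅gfun (xG p k) (yG p k) i, gfun (xG p k) (yG p k) j⁆ ^ p = 1 := by
  rcases le_total i j with h | h
  · exact comm_le p k hp hodd hk h hj
  · obtain ⟨hc, hq⟩ := comm_le p k hp hodd hk h hi
    have flip : ⁅gfun (xG p k) (yG p k) i, gfun (xG p k) (yG p k) j⁆
        = ⁅gfun (xG p k) (yG p k) j, gfun (xG p k) (yG p k) i⁆⁻¹ := by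
      rw [commutatorElement_inv]
    rw [flip]
    exact ⟨inv_mem hc, by rw [inv_pow, hq, inv_one]⟩

lemma subA (hd : i ∈ Set.Icc 1 ((p ^ k - 1) / 2)) :
    ⁅gfun (xG p k) (yG p k) i, gfun (xG p k) (yG p k) 0⁆ = (cI p k i)⁻¹ := by
  have h := comm_small p k hd 0
  rw [Nat.add_zero] at h
  rw [← h, commutatorElement_inv]

lemma subB (hd : i ∈ Set.Icc 1 ((p ^ k - 1) / 2)) :
    ⁅gfun (xG p k) (yG p k) (p ^ k - i), gfun (xG p k) (yG p k) 0⁆ = cI p k i := by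
  have hin : i ≤ p ^ k := by
    have := npos p k hp hodd hk
    have := hd.2
    omega
  have h := comm_small p k hd (p ^ k - i)
  rwa [show i + (p ^ k - i) = p ^ k by omega, gfun_n] at h

lemma pairs (h1 : 1 ≤ i) (hi : i < p ^ k) :
    ⁅gfun (xG p k) (yG p k) i, gfun (xG p k) (yG p k) 0⁆ *
      ⁅gfun (xG p k) (yG p k) (p ^ k - i), gfun (xG p k) (yG p k) 0⁆ = 1 := by
  have hno := Nat.odd_iff.mp (nodd p k hp hodd hk)
  by_cases hsmall : i ≤ (p ^ k - 1) / 2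
  · rw [subA p k hp hodd hk ⟨h1, hsmall⟩, subB p k hp hodd hk ⟨h1, hsmall⟩, inv_mul_cancel]
  · set e := p ^ k - i with hee
    have heIcc : e ∈ Set.Icc 1 ((p ^ k - 1) / 2) := ⟨by omega, by omega⟩
    have hi' : i = p ^ k - e := by omega
    rw [hi']
    rw [subB p k hp hodd hk heIcc, subA p k hp hodd hk heIcc, mul_inv_cancel]

lemma gfun_pow_p (hi : i < p ^ k) :
    gfun (xG p k) (yG p k) i ^ p = yG p k ^ p := by
  show ((xG p k ^ i)⁻¹ * yG p k * xG p k ^ i) ^ p = yG p k ^ p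
  rw [conj_pow']
  exact conj_eq_self_of_commute ((commyx p k).pow_right i)

end GkFacts

section GkInv

variable (p k : ℕ)

lemma gfun_inv (i : ℕ) :
    gfun (xG p k) (yG p k)⁻¹ i = (gfun (xG p k) (yG p k) i)⁻¹ := by
  show (xG p k ^ i)⁻¹ * (yG p k)⁻¹ * xG p k ^ i
      = ((xG p k ^ i)⁻¹ * yG p k * xG p k ^ i)⁻¹
  group

lemma gfun_n' : gfun (xG p k) (yG p k)⁻¹ (p ^ k) = gfun (xG p k) (yG p k)⁻¹ 0 := by
  rw [gfun_inv, gfun_inv, gfun_n]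

variable (hp : p.Prime) (hodd : Odd p) (hk : 1 ≤ k)
include hp hodd hk

lemma comm_inv_eq {i j : ℕ} (hi : i < p ^ k) (hj : j < p ^ k) :
    ⁅gfun (xG p k) (yG p k)⁻¹ i, gfun (xG p k) (yG p k)⁻¹ j⁆
      = ⁅gfun (xG p k) (yG p k) i, gfun (xG p k) (yG p k) j⁆ := by
  rw [gfun_inv, gfun_inv]
  exact commutator_inv_inv' (comm_all p k hp hodd hk hi hj).1

lemma comm_all' {i j : ℕ} (hi : i < p ^ k) (hj : j < p ^ k) :
    ⁅gfun (xG p k) (yG p k)⁻¹ i, gfun (xG p k) (yG p k)⁻¹ j⁆ ∈ Subgroup.center (Gk p k) ∧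
    ⁅gfun (xG p k) (yG p k)⁻¹ i, gfun (xG p k) (yG p k)⁻¹ j⁆ ^ p = 1 := by
  rw [comm_inv_eq p k hp hodd hk hi hj]
  exact comm_all p k hp hodd hk hi hj

lemma pairs' {i : ℕ} (h1 : 1 ≤ i) (hi : i < p ^ k) :
    ⁅gfun (xG p k) (yG p k)⁻¹ i, gfun (xG p k) (yG p k)⁻¹ 0⁆ *
      ⁅gfun (xG p k) (yG p k)⁻¹ (p ^ k - i), gfun (xG p k) (yG p k)⁻¹ 0⁆ = 1 := by
  have hnpos := npos p k hp hodd hk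
  rw [comm_inv_eq p k hp hodd hk hi hnpos, comm_inv_eq p k hp hodd hk (by omega) hnpos]
  exact pairs p k hp hodd hk h1 hi

lemma gfun_pow_p' {i : ℕ} (hi : i < p ^ k) :
    gfun (xG p k) (yG p k)⁻¹ i ^ p = (yG p k)⁻¹ ^ p := by
  rw [gfun_inv, inv_pow, gfun_pow_p p k hp hodd hk hi, inv_pow]

end GkInv

section Model

variable (p k : ℕ)

abbrev MA := Multiplicative (ZMod (p ^ k) → ZMod p)
abbrev MC := Multiplicative (ZMod (p ^ (k + 1)))

/-- The reduction map `ZMod p^{k+1} → ZMod p^k`. -/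
def castK : ZMod (p ^ (k + 1)) →+* ZMod (p ^ k) :=
  ZMod.castHom (pow_dvd_pow p (Nat.le_succ k)) _

/-- The shift automorphism of `MA`. -/
def shiftA (t : ZMod (p ^ (k + 1))) : MulAut (MA p k) :=
  MulEquiv.mk'
    { toFun := fun f => Multiplicative.ofAdd fun s => Multiplicative.toAdd f (s + castK p k t)
      invFun := fun f => Multiplicative.ofAdd fun s => Multiplicative.toAdd f (s - castK p k t)
      left_inv := fun f => by
        apply Multiplicative.toAdd.injective
        funext s
        show Multiplicative.toAdd f (s - castK p k t + castK p k t) = Multiplicative.toAdd f s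
        rw [sub_add_cancel]
      right_inv := fun f => by
        apply Multiplicative.toAdd.injective
        funext s
        show Multiplicative.toAdd f (s + castK p k t - castK p k t) = Multiplicative.toAdd f s
        rw [add_sub_cancel_right] }
    (fun f g => rfl)

/-- The action of `MC` on `MA` by shifts. -/
def shiftHom : MC p k →* MulAut (MA p k) :=
  MonoidHom.mk' (fun t => shiftA p k t.toAdd) (by
    intro t u
    apply MulEquiv.ext
    intro f
    apply Multiplicative.toAdd.injective
    funext s
    show Multiplicative.toAdd f (s + castK p k (t.toAdd + u.toAdd))
        = Multiplicative.toAdd f (s + castK p k t.toAdd + castK p k u.toAdd)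
    rw [map_add, ← add_assoc])

/-- The concrete model group. -/
abbrev MM := SemidirectProduct (MA p k) (MC p k) (shiftHom p k)

/-- The image of `y` in the model. -/
def e0 : MA p k := Multiplicative.ofAdd fun s => if s = 0 then 1 else 0

/-- Images of the generators in the model. -/
def fM : Fin 2 → MM p k :=
  ![SemidirectProduct.inr (Multiplicative.ofAdd 1), SemidirectProduct.inl (e0 p k)]

lemma shiftA_eq_one {t : ZMod (p ^ (k + 1))} (h : castK p k t = 0) : shiftA p k t = 1 := by
  apply MulEquiv.ext
  intro f
  apply Multiplicative.toAdd.injective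
  funext s
  show Multiplicative.toAdd f (s + castK p k t) = Multiplicative.toAdd f s
  rw [h, add_zero]

lemma e0_pow_dvd {m : ℕ} (hm : p ∣ m) : e0 p k ^ m = 1 := by
  apply Multiplicative.toAdd.injective
  rw [toAdd_pow]
  funext s
  show m • (if s = 0 then (1 : ZMod p) else 0) = 0
  rw [nsmul_eq_mul]
  have : ((m : ℕ) : ZMod p) = 0 := (ZMod.natCast_eq_zero_iff m p).mpr hm
  rw [this, zero_mul]

lemma inr_commute_inl {t : MC p k} (h : shiftHom p k t = 1) (v : MA p k) :
    Commute (SemidirectProduct.inr t : MM p k) (SemidirectProduct.inl v) := by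
  have haut := SemidirectProduct.inl_aut (φ := shiftHom p k) t v
  rw [h] at haut
  simp only [MulAut.one_apply] at haut
  have h2 : (SemidirectProduct.inl v : MM p k) * SemidirectProduct.inr t
      = SemidirectProduct.inr t * SemidirectProduct.inl v := by
    calc (SemidirectProduct.inl v : MM p k) * SemidirectProduct.inr t
        = (SemidirectProduct.inr t * SemidirectProduct.inl v * SemidirectProduct.inr t⁻¹) *
            SemidirectProduct.inr t := by rw [← haut]
      _ = SemidirectProduct.inr t * SemidirectProduct.inl v := by
          rw [mul_assoc, ← map_mul, inv_mul_cancel, map_one, mul_one]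
  exact h2.symm

lemma L_x : FreeGroup.lift (fM p k) xF = SemidirectProduct.inr (Multiplicative.ofAdd 1) := by
  simp [xF, fM]

lemma L_y : FreeGroup.lift (fM p k) yF = SemidirectProduct.inl (e0 p k) := by
  simp [yF, fM]

lemma ofAdd_one_pow (m : ℕ) :
    (Multiplicative.ofAdd (1 : ZMod (p ^ (k + 1)))) ^ m
      = Multiplicative.ofAdd ((m : ℕ) : ZMod (p ^ (k + 1))) := by
  rw [← ofAdd_nsmul]
  congr 1
  rw [nsmul_eq_mul, mul_one]

lemma shiftHom_natCast_eq_one : shiftHom p k (Multiplicative.ofAdd ((p ^ k : ℕ) : ZMod (p ^ (k + 1)))) = 1 := by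
  have : castK p k ((p ^ k : ℕ) : ZMod (p ^ (k + 1))) = 0 := by
    rw [map_natCast, ZMod.natCast_self]
  exact shiftA_eq_one p k this

lemma L_yiF_inl (i : ℕ) : ∃ v : MA p k, FreeGroup.lift (fM p k) (yiF i) = SemidirectProduct.inl v := by
  refine ⟨(shiftHom p k (Multiplicative.ofAdd ((i : ℕ) : ZMod (p ^ (k + 1)))))⁻¹ (e0 p k), ?_⟩
  rw [yiF, map_mul, map_mul, map_inv, map_pow, L_x, L_y, ← map_pow, ofAdd_one_pow]
  rw [SemidirectProduct.inl_aut_inv, ← map_inv]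

lemma commutator_one_left {H : Type*} [Group H] (z : H) : ⁅(1 : H), z⁆ = 1 := by
  simp [commutatorElement_def]

lemma hrels : ∀ r ∈ relsK p k, FreeGroup.lift (fM p k) r = 1 := by
  intro r hr
  rcases hr with hr | hr
  · simp only [Set.mem_insert_iff, Set.mem_singleton_iff] at hr
    rcases hr with rfl | rfl | rfl | rfl
    · rw [map_pow, L_x, ← map_pow, ofAdd_one_pow, ZMod.natCast_self, ofAdd_zero, map_one]
    · rw [map_pow, L_y, ← map_pow, e0_pow_dvd p k (dvd_pow_self p (by norm_num)), map_one]
    · rw [map_commutatorElement, map_pow, L_x, L_y, ← map_pow, ofAdd_one_pow]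
      exact commutatorElement_eq_one_iff_commute.mpr
        (inr_commute_inl p k (shiftHom_natCast_eq_one p k) _)
    · rw [map_commutatorElement, map_pow, L_y, L_x, ← map_pow,
        e0_pow_dvd p k dvd_rfl, map_one, commutator_one_left]
  · simp only [Set.mem_iUnion, exists_prop] at hr
    obtain ⟨i, _, hmem⟩ := hr
    obtain ⟨v0, hv0⟩ := L_yiF_inl p k 0
    obtain ⟨vi, hvi⟩ := L_yiF_inl p k i
    have hcom : FreeGroup.lift (fM p k) ⁅yiF 0, yiF i⁆ = 1 := by
      rw [map_commutatorElement, hv0, hvi]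
      exact commutatorElement_eq_one_iff_commute.mpr
        ((Commute.all v0 vi).map SemidirectProduct.inl)
    simp only [Set.mem_insert_iff, Set.mem_singleton_iff] at hmem
    rcases hmem with rfl | rfl | rfl
    · rw [map_pow, hcom, one_pow]
    · rw [map_commutatorElement, hcom, commutator_one_left]
    · rw [map_commutatorElement, hcom, commutator_one_left]

/-- The homomorphism from `G_k` to the model. -/
def Φm : Gk p k →* MM p k := PresentedGroup.toGroup (hrels p k)

lemma Φm_x : Φm p k (xG p k) = SemidirectProduct.inr (Multiplicative.ofAdd 1) := by
  rw [xG, Φm, PresentedGroup.toGroup.of]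
  simp [fM]

lemma Φm_y : Φm p k (yG p k) = SemidirectProduct.inl (e0 p k) := by
  rw [yG, Φm, PresentedGroup.toGroup.of]
  simp [fM]

lemma Φm_yiG (i : ℕ) :
    Φm p k (yiG p k i) = SemidirectProduct.inl
      (Multiplicative.ofAdd fun s => if s = ((i : ℕ) : ZMod (p ^ k)) then (1 : ZMod p) else 0) := by
  rw [yiG, map_mul, map_mul, map_inv, map_pow, Φm_x, Φm_y, ← map_pow, ofAdd_one_pow,
    ← map_inv, ← SemidirectProduct.inl_aut_inv, ← map_inv (shiftHom p k)]
  congr 1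
  apply Multiplicative.toAdd.injective
  funext s
  show Multiplicative.toAdd (e0 p k) (s + castK p k (Multiplicative.toAdd
      ((Multiplicative.ofAdd ((i : ℕ) : ZMod (p ^ (k+1))))⁻¹)))
      = if s = ((i : ℕ) : ZMod (p ^ k)) then (1 : ZMod p) else 0
  rw [toAdd_inv, toAdd_ofAdd, map_neg, map_natCast]
  show (if s + -((i : ℕ) : ZMod (p ^ k)) = 0 then (1 : ZMod p) else 0)
      = if s = ((i : ℕ) : ZMod (p ^ k)) then (1 : ZMod p) else 0
  simp only [← sub_eq_add_neg, sub_eq_zero]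

end Model

section ModelVal

variable (p k : ℕ) [NeZero (p ^ k)]

lemma model_W (d : ZMod p) :
    ∀ m, m ≤ p ^ k →
      (((List.range m).reverse).map (fun i => (SemidirectProduct.inl
          (Multiplicative.ofAdd fun s => if s = ((i : ℕ) : ZMod (p ^ k)) then d else 0)
        : MM p k))).prod
      = SemidirectProduct.inl
          (Multiplicative.ofAdd fun s : ZMod (p ^ k) => if s.val < m then d else 0) := by
  intro m
  induction m with
  | zero =>
    intro _
    simp only [List.range_zero, List.reverse_nil, List.map_nil, List.prod_nil, Nat.not_lt_zero,
      if_false]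
    rw [show (fun _ : ZMod (p ^ k) => (0 : ZMod p)) = (0 : ZMod (p ^ k) → ZMod p) from rfl,
      ofAdd_zero, map_one]
  | succ m ih =>
    intro hm
    have hmlt : m < p ^ k := hm
    rw [List.range_succ, List.reverse_append, List.reverse_singleton, List.singleton_append,
      List.map_cons, List.prod_cons, ih (Nat.le_of_succ_le hm), ← map_mul, ← ofAdd_add]
    congr 1
    apply Multiplicative.toAdd.injective
    funext s
    show (if s = ((m : ℕ) : ZMod (p ^ k)) then d else 0) + (if s.val < m then d else 0)
        = if s.val < m + 1 then d else 0
    have h1 : ((m : ℕ) : ZMod (p ^ k)).val = m := ZMod.val_cast_of_lt hmlt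
    have hcast : s = ((m : ℕ) : ZMod (p ^ k)) ↔ s.val = m := by
      constructor
      · intro h; rw [h, h1]
      · intro h; exact ZMod.val_injective _ (by rw [h, h1])
    by_cases hsm : s.val = m
    · rw [if_pos (hcast.mpr hsm), if_neg (by omega), if_pos (by omega), add_zero]
    · rw [if_neg (fun hh => hsm (hcast.mp hh)), zero_add]
      by_cases hlt : s.val < m
      · rw [if_pos hlt, if_pos (by omega)]
      · rw [if_neg hlt, if_neg (by omega)]

lemma Φm_wG :
    Φm p k (wG p k) = SemidirectProduct.inl
      (Multiplicative.ofAdd fun s : ZMod (p ^ k) => if s.val < p ^ k then (1 : ZMod p) else 0) := by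
  rw [wG, (Φm p k).map_list_prod, List.map_map]
  have hfun : (Φm p k) ∘ (fun i => yiG p k i) = fun i : ℕ => (SemidirectProduct.inl
      (Multiplicative.ofAdd fun s => if s = ((i : ℕ) : ZMod (p ^ k)) then (1 : ZMod p) else 0)
      : MM p k) := by
    funext i
    exact Φm_yiG p k i
  rw [hfun]
  exact model_W p k 1 (p ^ k) le_rfl

lemma Φm_wG' :
    Φm p k (wG' p k) = SemidirectProduct.inl
      (Multiplicative.ofAdd fun s : ZMod (p ^ k) =>
        if s.val < p ^ k then (-1 : ZMod p) else 0) := by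
  rw [wG', (Φm p k).map_list_prod, List.map_map]
  have hfun : (Φm p k) ∘ (fun i => (yiG p k i)⁻¹) = fun i : ℕ => (SemidirectProduct.inl
      (Multiplicative.ofAdd fun s => if s = ((i : ℕ) : ZMod (p ^ k)) then (-1 : ZMod p) else 0)
      : MM p k) := by
    funext i
    show Φm p k ((yiG p k i)⁻¹) = _
    rw [map_inv, Φm_yiG, ← map_inv, ← ofAdd_neg]
    congr 1
    apply Multiplicative.toAdd.injective
    funext s
    show -(if s = ((i : ℕ) : ZMod (p ^ k)) then (1 : ZMod p) else 0)
        = (if s = ((i : ℕ) : ZMod (p ^ k)) then (-1 : ZMod p) else 0)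
    by_cases h : s = ((i : ℕ) : ZMod (p ^ k))
    · rw [if_pos h, if_pos h]
    · rw [if_neg h, if_neg h, neg_zero]
  rw [hfun]
  exact model_W p k (-1) (p ^ k) le_rfl

lemma wG_ne_one (hp : p.Prime) : wG p k ≠ 1 := by
  haveI : Fact (1 < p) := ⟨hp.one_lt⟩
  intro h
  have h1 := congrArg (Φm p k) h
  rw [Φm_wG, map_one] at h1
  have h2 : (Multiplicative.ofAdd fun s : ZMod (p ^ k) =>
      if s.val < p ^ k then (1 : ZMod p) else 0) = (1 : MA p k) :=
    SemidirectProduct.inl_injective (by rw [h1, map_one])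
  have h3 : (if (0 : ZMod (p ^ k)).val < p ^ k then (1 : ZMod p) else 0) = 0 :=
    congrFun (congrArg Multiplicative.toAdd h2) 0
  rw [if_pos (by rw [ZMod.val_zero]; exact (NeZero.pos (p ^ k)))] at h3
  have h4 := congrArg ZMod.val h3
  rw [ZMod.val_one, ZMod.val_zero] at h4
  omega

lemma wG'_ne_one (hp : p.Prime) : wG' p k ≠ 1 := by
  haveI : Fact (1 < p) := ⟨hp.one_lt⟩
  intro h
  have h1 := congrArg (Φm p k) h
  rw [Φm_wG', map_one] at h1
  have h2 : (Multiplicative.ofAdd fun s : ZMod (p ^ k) =>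
      if s.val < p ^ k then (-1 : ZMod p) else 0) = (1 : MA p k) :=
    SemidirectProduct.inl_injective (by rw [h1, map_one])
  have h3 : (if (0 : ZMod (p ^ k)).val < p ^ k then (-1 : ZMod p) else 0) = 0 :=
    congrFun (congrArg Multiplicative.toAdd h2) 0
  rw [if_pos (by rw [ZMod.val_zero]; exact (NeZero.pos (p ^ k)))] at h3
  have h5 : (1 : ZMod p) = 0 := by
    have := neg_eq_zero.mp h3
    exact this
  have h4 := congrArg ZMod.val h5
  rw [ZMod.val_one, ZMod.val_zero] at h4
  omega

end ModelVal

end Stmt12Aux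

open Stmt12Aux in
/-- The elements `w = y_{p^k−1} ⋯ y_1 y_0` and
`w′ = y_{p^k−1}^{−1} ⋯ y_1^{−1} y_0^{−1}` have order `p` in `G_k` and lie in
`G_k^{p^k} ∩ Z(G_k)`. -/
theorem stmt12 (p k : ℕ) (hp : p.Prime) (hodd : Odd p) (hk : 1 ≤ k) :
    orderOf (wG p k) = p ∧ orderOf (wG' p k) = p ∧
    wG p k ∈ Subgroup.closure (Set.range (fun g : Gk p k => g ^ p ^ k)) ⊓
      Subgroup.center (Gk p k) ∧
    wG' p k ∈ Subgroup.closure (Set.range (fun g : Gk p k => g ^ p ^ k)) ⊓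
      Subgroup.center (Gk p k) := by
  haveI : Fact p.Prime := ⟨hp⟩
  haveI : NeZero (p ^ k) := ⟨(pow_pos hp.pos k).ne'⟩
  have hnpos : 0 < p ^ k := pow_pos hp.pos k
  have hnodd : Odd (p ^ k) := hodd.pow
  set a := xG p k with ha
  set b := yG p k with hb
  -- identifications
  have hw : wG p k = Wrd a b (p ^ k) := rfl
  have hw' : wG' p k = Wrd a b⁻¹ (p ^ k) := by
    rw [wG', Wrd]
    have hfn : (fun i => (yiG p k i)⁻¹) = gfun a b⁻¹ := by
      funext i
      exact (gfun_inv p k i).symm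
    rw [hfn]
  -- hypotheses for the word machinery, `c = b`
  have hcent : ∀ i j, i < p ^ k → j < p ^ k →
      ⁅gfun a b i, gfun a b j⁆ ∈ Subgroup.center (Gk p k) :=
    fun i j hi hj => (comm_all p k hp hodd hk hi hj).1
  have hpw : ∀ i j, i < p ^ k → j < p ^ k → ⁅gfun a b i, gfun a b j⁆ ^ p = 1 :=
    fun i j hi hj => (comm_all p k hp hodd hk hi hj).2
  have hpair : ∀ i, 1 ≤ i → i < p ^ k →
      ⁅gfun a b i, gfun a b 0⁆ * ⁅gfun a b (p ^ k - i), gfun a b 0⁆ = 1 :=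
    fun i h1 hi => pairs p k hp hodd hk h1 hi
  have hgp : ∀ i, i < p ^ k → gfun a b i ^ p = b ^ p :=
    fun i hi => gfun_pow_p p k hp hodd hk hi
  -- hypotheses for the word machinery, `c = b⁻¹`
  have hcent' : ∀ i j, i < p ^ k → j < p ^ k →
      ⁅gfun a b⁻¹ i, gfun a b⁻¹ j⁆ ∈ Subgroup.center (Gk p k) :=
    fun i j hi hj => (comm_all' p k hp hodd hk hi hj).1
  have hpw' : ∀ i j, i < p ^ k → j < p ^ k → ⁅gfun a b⁻¹ i, gfun a b⁻¹ j⁆ ^ p = 1 :=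
    fun i j hi hj => (comm_all' p k hp hodd hk hi hj).2
  have hpair' : ∀ i, 1 ≤ i → i < p ^ k →
      ⁅gfun a b⁻¹ i, gfun a b⁻¹ 0⁆ * ⁅gfun a b⁻¹ (p ^ k - i), gfun a b⁻¹ 0⁆ = 1 :=
    fun i h1 hi => pairs' p k hp hodd hk h1 hi
  have hgp' : ∀ i, i < p ^ k → gfun a b⁻¹ i ^ p = b⁻¹ ^ p :=
    fun i hi => gfun_pow_p' p k hp hodd hk hi
  -- commuting with the generators
  have hWb : Commute (Wrd a b (p ^ k)) b := by
    have h := Wrd_comm_g0 hnpos hnodd hcent hpair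
    rwa [gfun_zero] at h
  have hWa : Commute (Wrd a b (p ^ k)) a :=
    Wrd_comm_a (gfun_n p k) (by rw [gfun_zero]; exact hWb)
  have hW'binv : Commute (Wrd a b⁻¹ (p ^ k)) b⁻¹ := by
    have h := Wrd_comm_g0 hnpos hnodd hcent' hpair'
    rwa [gfun_zero] at h
  have hW'b : Commute (Wrd a b⁻¹ (p ^ k)) b := by
    have h := hW'binv.inv_right
    rwa [inv_inv] at h
  have hW'a : Commute (Wrd a b⁻¹ (p ^ k)) a :=
    Wrd_comm_a (gfun_n' p k) (by rw [gfun_zero]; exact hW'binv)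
  -- central
  have hwc : wG p k ∈ Subgroup.center (Gk p k) := by
    rw [hw]; exact mem_center_of p k hWa hWb
  have hwc' : wG' p k ∈ Subgroup.center (Gk p k) := by
    rw [hw']; exact mem_center_of p k hW'a hW'b
  -- p-th powers
  have hbp : (b ^ p) ^ p ^ k = 1 := by
    have hkk : k - 1 + 1 = k := by omega
    have e : p * p ^ k = p ^ 2 * p ^ (k - 1) := by
      conv_lhs => rw [← hkk]
      rw [pow_succ']
      rw [← mul_assoc, ← sq]
    rw [← pow_mul, e, pow_mul, rely, one_pow]
  have hwp : wG p k ^ p = 1 := by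
    rw [hw, Wrd_pow hodd hcent hpw hgp (p ^ k) le_rfl, hbp]
  have hwp' : wG' p k ^ p = 1 := by
    rw [hw', Wrd_pow hodd hcent' hpw' hgp' (p ^ k) le_rfl, inv_pow, inv_pow, hbp, inv_one]
  -- membership in the subgroup generated by p^k-th powers
  have hmem : wG p k ∈ Subgroup.closure (Set.range (fun g : Gk p k => g ^ p ^ k)) := by
    have h5 : (a ^ p ^ k)⁻¹ * (a * b) ^ p ^ k = Wrd a b (p ^ k) := by
      rw [mul_pow_eq_Wrd, ← mul_assoc, inv_mul_cancel, one_mul]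
    rw [hw, ← h5]
    exact mul_mem (inv_mem (Subgroup.subset_closure ⟨a, rfl⟩))
      (Subgroup.subset_closure ⟨a * b, rfl⟩)
  have hmem' : wG' p k ∈ Subgroup.closure (Set.range (fun g : Gk p k => g ^ p ^ k)) := by
    have h5 : (a ^ p ^ k)⁻¹ * (a * b⁻¹) ^ p ^ k = Wrd a b⁻¹ (p ^ k) := by
      rw [mul_pow_eq_Wrd, ← mul_assoc, inv_mul_cancel, one_mul]
    rw [hw', ← h5]
    exact mul_mem (inv_mem (Subgroup.subset_closure ⟨a, rfl⟩))
      (Subgroup.subset_closure ⟨a * b⁻¹, rfl⟩)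
  refine ⟨?_, ?_, ⟨hmem, hwc⟩, ⟨hmem', hwc'⟩⟩
  · exact orderOf_eq_prime hwp (wG_ne_one p k hp)
  · exact orderOf_eq_prime hwp' (wG'_ne_one p k hp)
end

section
/- Let p be an odd prime and let G_k be the finite p-group defined by the presentation above. Then γ_2(G_k) has exponent p. -/
open scoped commutatorElement

namespace St13

variable (p k : ℕ)

/-- projection -/
def pr : Fr →* Gk p k := PresentedGroup.mk _

lemma pr_x : pr p k xF = xG p k := rfl
lemma pr_y : pr p k yF = yG p k := rfl

lemma rel_one {r : Fr} (hr : r ∈ relsK p k) : pr p k r = 1 := by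
  exact (QuotientGroup.eq_one_iff r).2 (Subgroup.subset_normalClosure hr)

/-- ℤ-indexed conjugates of y -/
def yz (i : ℤ) : Gk p k := (xG p k ^ i)⁻¹ * yG p k * xG p k ^ i

lemma yz_zero : yz p k 0 = yG p k := by simp [yz]

lemma pr_yiF (i : ℕ) : pr p k (yiF i) = yz p k i := by
  simp [yiF, yz, map_mul, map_pow, map_inv, pr_x, pr_y, zpow_natCast]

-- relations, extracted
lemma mem_rels_cx (i : ℕ) (h1 : 1 ≤ i) (h2 : i ≤ (p ^ k - 1) / 2) :
    ⁅⁅yiF 0, yiF i⁆, xF⁆ ∈ relsK p k := by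
  refine Set.mem_union_right _ ?_
  refine Set.mem_biUnion (Set.mem_Icc.2 ⟨h1, h2⟩) ?_
  simp

lemma mem_rels_cy (i : ℕ) (h1 : 1 ≤ i) (h2 : i ≤ (p ^ k - 1) / 2) :
    ⁅⁅yiF 0, yiF i⁆, yF⁆ ∈ relsK p k := by
  refine Set.mem_union_right _ (Set.mem_biUnion (Set.mem_Icc.2 ⟨h1, h2⟩) ?_)
  simp

lemma mem_rels_cp (i : ℕ) (h1 : 1 ≤ i) (h2 : i ≤ (p ^ k - 1) / 2) :
    ⁅yiF 0, yiF i⁆ ^ p ∈ relsK p k := by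
  refine Set.mem_union_right _ (Set.mem_biUnion (Set.mem_Icc.2 ⟨h1, h2⟩) ?_)
  simp

lemma mem_rels_xy : ⁅xF ^ p ^ k, yF⁆ ∈ relsK p k := by
  refine Set.mem_union_left _ ?_
  simp [Set.mem_insert_iff]

lemma mem_rels_yx : ⁅yF ^ p, xF⁆ ∈ relsK p k := by
  refine Set.mem_union_left _ ?_
  simp [Set.mem_insert_iff]

-- generation
lemma gen_top : Subgroup.closure ({xG p k, yG p k} : Set (Gk p k)) = ⊤ := by
  have h := PresentedGroup.closure_range_of (relsK p k)
  have : (Set.range (PresentedGroup.of : Fin 2 → Gk p k)) = {xG p k, yG p k} := by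
    ext g
    constructor
    · rintro ⟨i, rfl⟩
      fin_cases i
      · exact Or.inl rfl
      · exact Or.inr rfl
    · rintro (rfl | rfl)
      · exact ⟨0, rfl⟩
      · exact ⟨1, rfl⟩
  rwa [this] at h

lemma commute_all {a : Gk p k} (hx : Commute (xG p k) a) (hy : Commute (yG p k) a)
    (g : Gk p k) : Commute g a := by
  have hg : g ∈ Subgroup.closure ({xG p k, yG p k} : Set (Gk p k)) := by
    rw [gen_top]; trivial
  induction hg using Subgroup.closure_induction with
  | mem z hz => rcases hz with rfl | rfl; exacts [hx, hy]
  | one => exact Commute.one_left a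
  | mul u v _ _ hu hv => exact hu.mul_left hv
  | inv u _ hu => exact hu.inv_left

end St13

namespace St13
variable (p k : ℕ)

-- y^p is central
lemma yp_central (g : Gk p k) : Commute g (yG p k ^ p) := by
  apply commute_all
  · have h := rel_one p k (mem_rels_yx p k)
    rw [map_commutatorElement] at h
    have := commutatorElement_eq_one_iff_commute.1 h
    simpa [pr_x, pr_y, map_pow] using this.symm
  · exact (Commute.refl (yG p k)).pow_right p

-- x^{p^k} commutes with y
lemma xpk_comm : Commute ((xG p k : Gk p k) ^ (p ^ k : ℕ)) (yG p k) := by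
  have h := rel_one p k (mem_rels_xy p k)
  rw [map_commutatorElement] at h
  simpa [pr_x, pr_y, map_pow] using commutatorElement_eq_one_iff_commute.1 h

-- x^m commutes with yz i when x^m commutes with y
lemma yz_add_of_comm {m : ℤ} (hm : Commute ((xG p k) ^ m) (yG p k)) (i : ℤ) :
    yz p k (i + m) = yz p k i := by
  have hc : Commute ((xG p k) ^ m) (yz p k i) := by
    unfold yz
    exact ((Commute.zpow_zpow_self (xG p k) m i).inv_right.mul_right hm).mul_right
      (Commute.zpow_zpow_self (xG p k) m i)
  have : yz p k (i + m) = ((xG p k) ^ m)⁻¹ * yz p k i * (xG p k) ^ m := by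
    unfold yz
    rw [zpow_add]
    group
  rw [this, mul_assoc, ← hc.eq]
  group

lemma yz_period (i : ℤ) (n : ℤ) : yz p k (i + n * (p ^ k : ℕ)) = yz p k i := by
  apply yz_add_of_comm
  have h : Commute ((xG p k) ^ ((p ^ k : ℕ) : ℤ)) (yG p k) := by
    rw [zpow_natCast]
    exact xpk_comm p k
  have := h.zpow_left n
  rwa [← zpow_mul, mul_comm] at this

lemma yz_pow_p (i : ℤ) : (yz p k i) ^ p = yG p k ^ p := by
  have h0 : yz p k i = ((xG p k) ^ i)⁻¹ * yG p k * (((xG p k) ^ i)⁻¹)⁻¹ := by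
    rw [inv_inv]; rfl
  have hc := (yp_central p k ((xG p k) ^ i)).eq
  rw [h0, conj_pow, inv_inv, mul_assoc, ← hc]
  group

-- conjugation shift
lemma xconj (m i : ℤ) : ((xG p k) ^ m)⁻¹ * yz p k i * (xG p k) ^ m = yz p k (i + m) := by
  unfold yz
  rw [zpow_add]
  group

lemma shift_comm (i j : ℤ) :
    ⁅yz p k i, yz p k j⁆ = ((xG p k) ^ i)⁻¹ * ⁅yz p k 0, yz p k (j - i)⁆ * (xG p k) ^ i := by
  have h1 := xconj p k i 0
  have h2 := xconj p k i (j - i)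
  rw [zero_add] at h1
  rw [sub_add_cancel] at h2
  rw [← h1, ← h2]
  simp only [commutatorElement_def]
  group

end St13

namespace St13
variable (p k : ℕ)

/-- "central of order dividing p" -/
def Cp0 (c : Gk p k) : Prop := (∀ g, Commute g c) ∧ c ^ p = 1

lemma cp0_one : Cp0 p k 1 := ⟨fun g => Commute.one_right g, one_pow p⟩

lemma cp0_mul {c d : Gk p k} (hc : Cp0 p k c) (hd : Cp0 p k d) : Cp0 p k (c * d) :=
  ⟨fun g => (hc.1 g).mul_right (hd.1 g),
   by rw [(hc.1 d).symm.mul_pow, hc.2, hd.2, one_mul]⟩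

lemma cp0_inv {c : Gk p k} (hc : Cp0 p k c) : Cp0 p k c⁻¹ :=
  ⟨fun g => (hc.1 g).inv_right, by rw [inv_pow, hc.2, inv_one]⟩

lemma cp0_conj {c : Gk p k} (hc : Cp0 p k c) (g : Gk p k) : g * c * g⁻¹ = c := by
  rw [(hc.1 g).eq]
  group

lemma cp0_base (i : ℕ) (h1 : 1 ≤ i) (h2 : i ≤ (p ^ k - 1) / 2) :
    Cp0 p k ⁅yz p k 0, yz p k i⁆ := by
  constructor
  · apply commute_all
    · have h := rel_one p k (mem_rels_cx p k i h1 h2)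
      rw [map_commutatorElement, map_commutatorElement] at h
      have := commutatorElement_eq_one_iff_commute.1 h
      simpa [pr_x, pr_yiF] using this.symm
    · have h := rel_one p k (mem_rels_cy p k i h1 h2)
      rw [map_commutatorElement, map_commutatorElement] at h
      have := commutatorElement_eq_one_iff_commute.1 h
      simpa [pr_y, pr_yiF] using this.symm
  · have h := rel_one p k (mem_rels_cp p k i h1 h2)
    rw [map_pow, map_commutatorElement] at h
    simpa [pr_yiF] using h

lemma cp0_zero (hodd : Odd p) (m : ℤ) : Cp0 p k ⁅yz p k 0, yz p k m⁆ := by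
  have hoddpk : Odd (p ^ k) := hodd.pow
  obtain ⟨t, ht⟩ := hoddpk
  have hM : ((p ^ k - 1) / 2 : ℕ) = t := by omega
  set P : ℤ := ((p ^ k : ℕ) : ℤ) with hPdef
  obtain ⟨s, hs⟩ := hodd
  have hppos : 0 < p ^ k := pow_pos (by omega) k
  have hP : 0 < P := by rw [hPdef]; exact_mod_cast hppos
  set r : ℤ := m % P with hrdef
  have hr0 : 0 ≤ r := Int.emod_nonneg m (ne_of_gt hP)
  have hr1 : r < P := Int.emod_lt_of_pos m hP
  have hmr : m = r + (m / P) * P := by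
    have h := Int.mul_ediv_add_emod m P
    rw [mul_comm]
    omega
  have hyzm : yz p k m = yz p k r := by
    rw [hmr]
    exact yz_period p k r (m / P)
  rw [hyzm]
  rcases eq_or_lt_of_le hr0 with h0 | hpos
  · -- r = 0
    rw [← h0]
    constructor
    · intro g
      have : ⁅yz p k 0, yz p k 0⁆ = 1 := by
        simp only [commutatorElement_def]; group
      rw [this]; exact Commute.one_right g
    · have : ⁅yz p k 0, yz p k 0⁆ = 1 := by
        simp only [commutatorElement_def]; group
      rw [this, one_pow]
  · rcases le_or_gt r (t : ℤ) with hle | hgt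
    · -- 1 ≤ r ≤ t
      have hcast : ((r.toNat : ℕ) : ℤ) = r := Int.toNat_of_nonneg hr0
      have := cp0_base p k r.toNat (by omega) (by omega)
      rwa [hcast] at this
    · -- t < r < P, use d := P - r
      set d : ℤ := P - r with hddef
      have hd1 : 1 ≤ d := by omega
      have hdt : d ≤ t := by
        have : P = 2 * t + 1 := by
          rw [hPdef, ht]; push_cast; ring
        omega
      have hyzr : yz p k r = yz p k (-d) := by
        have hper := yz_period p k (-d) 1
        rw [one_mul, ← hPdef] at hper
        have he : -d + P = r := by omega
        rw [he] at hper
        exact hper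
      rw [hyzr]
      have hcast : ((d.toNat : ℕ) : ℤ) = d := Int.toNat_of_nonneg (by omega)
      have hb : Cp0 p k ⁅yz p k 0, yz p k d⁆ := by
        have := cp0_base p k d.toNat (by omega) (by omega)
        rwa [hcast] at this
      have hbinv : Cp0 p k ⁅yz p k d, yz p k 0⁆ := by
        rw [← commutatorElement_inv]
        exact cp0_inv p k hb
      have hshift := shift_comm p k d 0
      have : ⁅yz p k 0, yz p k (0 - d)⁆
          = (xG p k ^ d) * ⁅yz p k d, yz p k 0⁆ * (xG p k ^ d)⁻¹ := by
        rw [hshift]; group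
      rw [cp0_conj p k hbinv] at this
      rw [show (0 : ℤ) - d = -d by ring] at this
      rw [this]
      exact hbinv

lemma cp0_all (hodd : Odd p) (i j : ℤ) : Cp0 p k ⁅yz p k i, yz p k j⁆ := by
  have h0 := cp0_zero p k hodd (j - i)
  have hshift := shift_comm p k i j
  have : ⁅yz p k i, yz p k j⁆ = (xG p k ^ i)⁻¹ * ⁅yz p k 0, yz p k (j - i)⁆ * ((xG p k ^ i)⁻¹)⁻¹ := by
    rw [hshift]; group
  rw [cp0_conj p k h0] at this
  rw [this]
  exact h0

end St13

namespace St13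
variable (p k : ℕ)

/-- generating set of K -/
def SK : Set (Gk p k) :=
  {c | ∃ i j : ℤ, c = ⁅yz p k i, yz p k j⁆} ∪
  {w | ∃ i : ℤ, w = (yz p k i)⁻¹ * yz p k (i + 1)}

def K : Subgroup (Gk p k) := Subgroup.closure (SK p k)

def CpK (c : Gk p k) : Prop := Cp0 p k c ∧ c ∈ K p k

lemma cpk_one : CpK p k 1 := ⟨cp0_one p k, one_mem _⟩

lemma cpk_mul {c d : Gk p k} (hc : CpK p k c) (hd : CpK p k d) : CpK p k (c * d) :=
  ⟨cp0_mul p k hc.1 hd.1, mul_mem hc.2 hd.2⟩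

lemma cpk_inv {c : Gk p k} (hc : CpK p k c) : CpK p k c⁻¹ :=
  ⟨cp0_inv p k hc.1, inv_mem hc.2⟩

lemma cpk_base (hodd : Odd p) (i j : ℤ) : CpK p k ⁅yz p k i, yz p k j⁆ :=
  ⟨cp0_all p k hodd i j, Subgroup.subset_closure (Or.inl ⟨i, j, rfl⟩)⟩

lemma comm_mul_left {a b c : Gk p k} (ha : CpK p k ⁅a, c⁆) (hb : CpK p k ⁅b, c⁆) :
    CpK p k ⁅a * b, c⁆ := by
  have hid : ⁅a * b, c⁆ = a * ⁅b, c⁆ * a⁻¹ * ⁅a, c⁆ := by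
    simp only [commutatorElement_def]; group
  rw [hid, cp0_conj p k hb.1 a]
  exact cpk_mul p k hb ha

lemma comm_inv_left {a c : Gk p k} (ha : CpK p k ⁅a, c⁆) : CpK p k ⁅a⁻¹, c⁆ := by
  have hid : ⁅a⁻¹, c⁆ = a⁻¹ * ⁅a, c⁆⁻¹ * (a⁻¹)⁻¹ := by
    simp only [commutatorElement_def]; group
  rw [hid, cp0_conj p k (cp0_inv p k ha.1) a⁻¹]
  exact cpk_inv p k ha

lemma comm_flip {a c : Gk p k} (ha : CpK p k ⁅a, c⁆) : CpK p k ⁅c, a⁆ := by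
  rw [← commutatorElement_inv]
  exact cpk_inv p k ha

lemma comm_mul_right {a c d : Gk p k} (hc : CpK p k ⁅a, c⁆) (hd : CpK p k ⁅a, d⁆) :
    CpK p k ⁅a, c * d⁆ :=
  comm_flip p k (comm_mul_left p k (comm_flip p k hc) (comm_flip p k hd))

lemma comm_inv_right {a c : Gk p k} (hc : CpK p k ⁅a, c⁆) : CpK p k ⁅a, c⁻¹⁆ :=
  comm_flip p k (comm_inv_left p k (comm_flip p k hc))

lemma sd_comm (hodd : Odd p) (i j : ℤ) :
    CpK p k ⁅(yz p k i)⁻¹ * yz p k (i + 1), yz p k j⁆ :=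
  comm_mul_left p k (comm_inv_left p k (cpk_base p k hodd i j)) (cpk_base p k hodd (i + 1) j)

lemma base_base (hodd : Odd p) {s t : Gk p k} (hs : s ∈ SK p k) (ht : t ∈ SK p k) :
    CpK p k ⁅s, t⁆ := by
  rcases ht with ⟨i, j, rfl⟩ | ⟨i, rfl⟩
  · have h1 : Commute s ⁅yz p k i, yz p k j⁆ := (cp0_all p k hodd i j).1 s
    rw [commutatorElement_eq_one_iff_commute.2 h1]
    exact cpk_one p k
  · rcases hs with ⟨a, b, rfl⟩ | ⟨a, rfl⟩
    · have h1 : Commute ⁅yz p k a, yz p k b⁆ ((yz p k i)⁻¹ * yz p k (i + 1)) :=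
        ((cp0_all p k hodd a b).1 _).symm
      rw [commutatorElement_eq_one_iff_commute.2 h1]
      exact cpk_one p k
    · exact comm_mul_right p k
        (comm_inv_right p k (sd_comm p k hodd a i))
        (sd_comm p k hodd a (i + 1))

lemma K_comm (hodd : Odd p) {g h : Gk p k} (hg : g ∈ K p k) (hh : h ∈ K p k) :
    CpK p k ⁅g, h⁆ := by
  have step1 : ∀ s ∈ SK p k, ∀ h' ∈ K p k, CpK p k ⁅s, h'⁆ := by
    intro s hs h' hh'
    induction hh' using Subgroup.closure_induction with
    | mem t ht => exact base_base p k hodd hs ht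
    | one =>
        have : ⁅s, (1 : Gk p k)⁆ = 1 := by simp only [commutatorElement_def]; group
        rw [this]; exact cpk_one p k
    | mul u v hu hv ihu ihv => exact comm_mul_right p k ihu ihv
    | inv u hu ihu => exact comm_inv_right p k ihu
  induction hg using Subgroup.closure_induction with
  | mem s hs => exact step1 s hs h hh
  | one =>
      have : ⁅(1 : Gk p k), h⁆ = 1 := by simp only [commutatorElement_def]; group
      rw [this]; exact cpk_one p k
  | mul u v hu hv ihu ihv => exact comm_mul_left p k ihu ihv
  | inv u hu ihu => exact comm_inv_left p k ihu

end St13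

namespace St13
variable (p k : ℕ)

lemma pow_aux {a b c : Gk p k} (hc : ∀ g, Commute g c) (h : b * a = c * (a * b)) :
    ∀ n : ℕ, (a * b) ^ n = c ^ n.choose 2 * (a ^ n * b ^ n) := by
  have L1 : ∀ n : ℕ, b ^ n * a = c ^ n * (a * b ^ n) := by
    intro n
    induction n with
    | zero => simp
    | succ m ih =>
        have hbc : b ^ m * c = c * b ^ m := (hc (b ^ m)).eq
        calc b ^ (m + 1) * a = b ^ m * (b * a) := by rw [pow_succ]; group
          _ = b ^ m * c * (a * b) := by rw [h]; group
          _ = c * (b ^ m * a * b) := by rw [hbc]; group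
          _ = c * (c ^ m * (a * b ^ m) * b) := by rw [ih]
          _ = c ^ (m + 1) * (a * b ^ (m + 1)) := by rw [pow_succ, pow_succ]; group
  intro n
  induction n with
  | zero => simp
  | succ m ih =>
      have hch : (m + 1).choose 2 = m + m.choose 2 := by
        rw [Nat.choose_succ_succ', Nat.choose_one_right]
      have hac : a ^ m * c ^ m = c ^ m * a ^ m := ((hc (a ^ m)).pow_right m).eq
      have hcc : c ^ m * c ^ m.choose 2 = c ^ m.choose 2 * c ^ m :=
        (((Commute.refl c).pow_left m).pow_right (m.choose 2)).eq
      calc (a * b) ^ (m + 1) = (a * b) ^ m * (a * b) := by rw [pow_succ]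
        _ = c ^ m.choose 2 * (a ^ m * (b ^ m * a) * b) := by rw [ih]; group
        _ = c ^ m.choose 2 * (a ^ m * (c ^ m * (a * b ^ m)) * b) := by rw [L1 m]
        _ = c ^ m.choose 2 * (a ^ m * c ^ m * (a * b ^ m * b)) := by group
        _ = c ^ m.choose 2 * (c ^ m * a ^ m * (a * b ^ m * b)) := by rw [hac]
        _ = c ^ m.choose 2 * c ^ m * (a ^ (m + 1) * b ^ (m + 1)) := by
            rw [pow_succ, pow_succ]; group
        _ = c ^ (m + 1).choose 2 * (a ^ (m + 1) * b ^ (m + 1)) := by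
            rw [hch, pow_add c m (m.choose 2), hcc]
  
lemma pow_p (hodd : Odd p) {a b c : Gk p k} (hc : ∀ g, Commute g c) (hcp : c ^ p = 1)
    (h : b * a = c * (a * b)) : (a * b) ^ p = a ^ p * b ^ p := by
  obtain ⟨s, hs⟩ := hodd
  have hch : p.choose 2 = p * s := by
    have h2 : p * (p - 1) = 2 * (p * s) := by subst hs; simp; ring
    rw [Nat.choose_two_right, h2, Nat.mul_div_cancel_left _ two_pos]
  rw [pow_aux p k hc h p, hch, pow_mul, hcp, one_pow, one_mul]

lemma K_pow (hodd : Odd p) {g : Gk p k} (hg : g ∈ K p k) : g ^ p = 1 := by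
  induction hg using Subgroup.closure_induction with
  | mem s hs =>
      rcases hs with ⟨i, j, rfl⟩ | ⟨i, rfl⟩
      · exact (cp0_all p k hodd i j).2
      · have hcpk : CpK p k ⁅yz p k (i + 1), (yz p k i)⁻¹⁆ :=
          comm_inv_right p k (cpk_base p k hodd (i + 1) i)
        have h := pow_p p k hodd hcpk.1.1 hcpk.1.2
          (show yz p k (i + 1) * (yz p k i)⁻¹
              = ⁅yz p k (i + 1), (yz p k i)⁻¹⁆ * ((yz p k i)⁻¹ * yz p k (i + 1)) by
            simp only [commutatorElement_def]; group)
        rw [h, inv_pow, yz_pow_p, yz_pow_p]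
        group
  | one => exact one_pow p
  | mul u v hu hv ihu ihv =>
      have hcpk : CpK p k ⁅v, u⁆ := K_comm p k hodd hv hu
      have h := pow_p p k hodd hcpk.1.1 hcpk.1.2
        (show v * u = ⁅v, u⁆ * (u * v) by simp only [commutatorElement_def]; group)
      rw [h, ihu, ihv, one_mul]
  | inv u hu ihu => rw [inv_pow, ihu, inv_one]

end St13

namespace St13
variable (p k : ℕ)

lemma xconj' (m i : ℤ) :
    (xG p k ^ m) * yz p k i * (xG p k ^ m)⁻¹ = yz p k (i - m) := by
  have h := xconj p k (-m) i
  rw [zpow_neg, inv_inv] at h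
  rw [h, sub_eq_add_neg]

lemma conj_commutator (g a b : Gk p k) :
    g * ⁅a, b⁆ * g⁻¹ = ⁅g * a * g⁻¹, g * b * g⁻¹⁆ := by
  simp only [commutatorElement_def]; group

lemma conj_x_mem (m : ℤ) {s : Gk p k} (hs : s ∈ SK p k) :
    (xG p k ^ m) * s * (xG p k ^ m)⁻¹ ∈ SK p k := by
  rcases hs with ⟨i, j, rfl⟩ | ⟨i, rfl⟩
  · rw [conj_commutator, xconj', xconj']
    exact Or.inl ⟨i - m, j - m, rfl⟩
  · have hid : (xG p k ^ m) * ((yz p k i)⁻¹ * yz p k (i + 1)) * (xG p k ^ m)⁻¹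
        = ((xG p k ^ m) * yz p k i * (xG p k ^ m)⁻¹)⁻¹
          * ((xG p k ^ m) * yz p k (i + 1) * (xG p k ^ m)⁻¹) := by group
    rw [hid, xconj', xconj']
    refine Or.inr ⟨i - m, ?_⟩
    rw [show i + 1 - m = i - m + 1 by ring]

lemma conj_y_mem (hodd : Odd p) {g : Gk p k}
    (hg : g = yG p k ∨ g = (yG p k)⁻¹) {s : Gk p k} (hs : s ∈ SK p k) :
    g * s * g⁻¹ ∈ K p k := by
  rcases hs with ⟨i, j, rfl⟩ | ⟨i, rfl⟩
  · rw [cp0_conj p k (cp0_all p k hodd i j) g]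
    exact Subgroup.subset_closure (Or.inl ⟨i, j, rfl⟩)
  · set w : Gk p k := (yz p k i)⁻¹ * yz p k (i + 1) with hw
    have hwK : w ∈ K p k := Subgroup.subset_closure (Or.inr ⟨i, rfl⟩)
    have hid : g * w * g⁻¹ = ⁅g, w⁆ * w := by
      simp only [commutatorElement_def]; group
    rw [hid]
    have hy0 : CpK p k ⁅yz p k 0, w⁆ := comm_flip p k (sd_comm p k hodd i 0)
    rcases hg with rfl | rfl
    · rw [← yz_zero p k]
      exact mul_mem hy0.2 hwK
    · rw [← yz_zero p k]
      exact mul_mem (comm_inv_left p k hy0).2 hwK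

lemma conj_closure {g : Gk p k} (hbase : ∀ s ∈ SK p k, g * s * g⁻¹ ∈ K p k) :
    ∀ n ∈ K p k, g * n * g⁻¹ ∈ K p k := by
  intro n hn
  induction hn using Subgroup.closure_induction with
  | mem s hs => exact hbase s hs
  | one => rw [mul_one, mul_inv_cancel]; exact one_mem _
  | mul u v hu hv ihu ihv =>
      have hid : g * (u * v) * g⁻¹ = (g * u * g⁻¹) * (g * v * g⁻¹) := by group
      rw [hid]; exact mul_mem ihu ihv
  | inv u hu ihu =>
      have hid : g * u⁻¹ * g⁻¹ = (g * u * g⁻¹)⁻¹ := by group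
      rw [hid]; exact inv_mem ihu

lemma conj_mem (hodd : Odd p) (g : Gk p k) : ∀ n ∈ K p k, g * n * g⁻¹ ∈ K p k := by
  have hg : g ∈ Subgroup.closure ({xG p k, yG p k} : Set (Gk p k)) := by
    rw [gen_top]; trivial
  have main : (∀ n ∈ K p k, g * n * g⁻¹ ∈ K p k) ∧ (∀ n ∈ K p k, g⁻¹ * n * g ∈ K p k) := by
    induction hg using Subgroup.closure_induction with
    | mem z hz =>
        rcases hz with rfl | rfl
        · constructor
          · apply conj_closure
            intro s hs
            have := conj_x_mem p k 1 hs
            rw [zpow_one] at this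
            exact Subgroup.subset_closure this
          · apply conj_closure
            intro s hs
            have := conj_x_mem p k (-1) hs
            rw [zpow_neg, zpow_one, inv_inv] at this
            exact Subgroup.subset_closure this
        · constructor
          · exact conj_closure p k (fun s hs => conj_y_mem p k hodd (Or.inl rfl) hs)
          · have h2 : ∀ s ∈ SK p k, (yG p k)⁻¹ * s * ((yG p k)⁻¹)⁻¹ ∈ K p k := by
              intro s hs
              exact conj_y_mem p k hodd (Or.inr rfl) hs
            intro n hn
            have := conj_closure p k h2 n hn
            rwa [inv_inv] at this
    | one => constructor <;> intro n hn <;> simpa using hn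
    | mul u v hu hv ihu ihv =>
        constructor
        · intro n hn
          have hid : (u * v) * n * (u * v)⁻¹ = u * (v * n * v⁻¹) * u⁻¹ := by group
          rw [hid]
          exact ihu.1 _ (ihv.1 n hn)
        · intro n hn
          have hid : (u * v)⁻¹ * n * (u * v) = v⁻¹ * (u⁻¹ * n * u) * v := by group
          rw [hid]
          exact ihv.2 _ (ihu.2 n hn)
    | inv u hu ihu =>
        constructor
        · intro n hn
          rw [inv_inv]
          exact ihu.2 n hn
        · intro n hn
          rw [inv_inv]
          exact ihu.1 n hn
  exact main.1

lemma comm_xy_mem (hodd : Odd p) : ⁅xG p k, yG p k⁆ ∈ K p k := by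
  have hxyx : xG p k * yG p k * (xG p k)⁻¹ = yz p k (-1) := by
    have h := xconj' p k 1 0
    rw [zpow_one, yz_zero] at h
    rw [h, zero_sub]
  have key : ⁅xG p k, yG p k⁆ = yz p k (-1) * (yG p k)⁻¹ := by
    rw [commutatorElement_def, hxyx]
  have hs : (yz p k (-1))⁻¹ * yz p k 0 ∈ K p k := by
    refine Subgroup.subset_closure (Or.inr ⟨-1, ?_⟩)
    norm_num
  have hconj := conj_mem p k hodd (yz p k (-1)) _ (inv_mem hs)
  have hid : yz p k (-1) * (yG p k)⁻¹
      = yz p k (-1) * ((yz p k (-1))⁻¹ * yz p k 0)⁻¹ * (yz p k (-1))⁻¹ := by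
    rw [yz_zero]; group
  rw [key, hid]
  exact hconj

lemma comm_all_mem (hodd : Odd p) (g h : Gk p k) : ⁅g, h⁆ ∈ K p k := by
  have idA : ∀ a b c : Gk p k, ⁅a * b, c⁆ = a * ⁅b, c⁆ * a⁻¹ * ⁅a, c⁆ := by
    intro a b c; simp only [commutatorElement_def]; group
  have idB : ∀ a c : Gk p k, ⁅a⁻¹, c⁆ = a⁻¹ * ⁅a, c⁆⁻¹ * (a⁻¹)⁻¹ := by
    intro a c; simp only [commutatorElement_def]; group
  have idC : ∀ a c d : Gk p k, ⁅a, c * d⁆ = ⁅a, c⁆ * (c * ⁅a, d⁆ * c⁻¹) := by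
    intro a c d; simp only [commutatorElement_def]; group
  have idD : ∀ a c : Gk p k, ⁅a, c⁻¹⁆ = c⁻¹ * ⁅a, c⁆⁻¹ * (c⁻¹)⁻¹ := by
    intro a c; simp only [commutatorElement_def]; group
  have step1 : ∀ g' : Gk p k, ⁅g', xG p k⁆ ∈ K p k ∧ ⁅g', yG p k⁆ ∈ K p k := by
    intro g'
    have hg' : g' ∈ Subgroup.closure ({xG p k, yG p k} : Set (Gk p k)) := by
      rw [gen_top]; trivial
    induction hg' using Subgroup.closure_induction with
    | mem z hz =>
        rcases hz with rfl | rfl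
        · refine ⟨?_, ?_⟩
          · rw [commutatorElement_eq_one_iff_commute.2 (Commute.refl _)]
            exact one_mem _
          · exact comm_xy_mem p k hodd
        · refine ⟨?_, ?_⟩
          · rw [← commutatorElement_inv]
            exact inv_mem (comm_xy_mem p k hodd)
          · rw [commutatorElement_eq_one_iff_commute.2 (Commute.refl _)]
            exact one_mem _
    | one =>
        have h1 : ∀ c : Gk p k, ⁅(1 : Gk p k), c⁆ = 1 := by
          intro c; simp only [commutatorElement_def]; group
        rw [h1, h1]
        exact ⟨one_mem _, one_mem _⟩
    | mul u v hu hv ihu ihv =>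
        constructor
        · rw [idA]
          exact mul_mem (conj_mem p k hodd u _ ihv.1) ihu.1
        · rw [idA]
          exact mul_mem (conj_mem p k hodd u _ ihv.2) ihu.2
    | inv u hu ihu =>
        constructor
        · rw [idB]
          exact conj_mem p k hodd u⁻¹ _ (inv_mem ihu.1)
        · rw [idB]
          exact conj_mem p k hodd u⁻¹ _ (inv_mem ihu.2)
  have hh : h ∈ Subgroup.closure ({xG p k, yG p k} : Set (Gk p k)) := by
    rw [gen_top]; trivial
  induction hh using Subgroup.closure_induction with
  | mem z hz =>
      rcases hz with rfl | rfl
      · exact (step1 g).1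
      · exact (step1 g).2
  | one =>
      rw [show ⁅g, (1 : Gk p k)⁆ = 1 by simp only [commutatorElement_def]; group]
      exact one_mem _
  | mul u v hu hv ihu ihv =>
      rw [idC]
      exact mul_mem ihu (conj_mem p k hodd u _ ihv)
  | inv u hu ihu =>
      rw [idD]
      exact conj_mem p k hodd u⁻¹ _ (inv_mem ihu)

lemma commutator_le_K (hodd : Odd p) : commutator (Gk p k) ≤ K p k := by
  rw [commutator_def]
  exact Subgroup.commutator_le.mpr (fun g _ h _ => comm_all_mem p k hodd g h)

end St13

/-- A Heisenberg-type group mod p. -/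
@[ext]
structure Hsb (p : ℕ) where
  a : ZMod p
  b : ZMod p
  c : ZMod p

namespace Hsb

variable {p : ℕ}

instance : Mul (Hsb p) := ⟨fun u v => ⟨u.a + v.a, u.b + v.b, u.c + v.c + u.a * v.b⟩⟩
instance : One (Hsb p) := ⟨⟨0, 0, 0⟩⟩
instance : Inv (Hsb p) := ⟨fun u => ⟨-u.a, -u.b, -u.c + u.a * u.b⟩⟩

lemma mul_def (u v : Hsb p) :
    u * v = ⟨u.a + v.a, u.b + v.b, u.c + v.c + u.a * v.b⟩ := rfl
lemma one_def : (1 : Hsb p) = ⟨0, 0, 0⟩ := rfl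
lemma inv_def (u : Hsb p) : u⁻¹ = ⟨-u.a, -u.b, -u.c + u.a * u.b⟩ := rfl

instance : Group (Hsb p) where
  mul_assoc u v w := by
    simp only [mul_def]
    ext <;> simp <;> ring
  one_mul u := by simp [mul_def, one_def]
  mul_one u := by simp [mul_def, one_def]
  inv_mul_cancel u := by
    simp only [mul_def, inv_def, one_def]
    ext <;> simp <;> ring

def X : Hsb p := ⟨1, 0, 0⟩
def Y : Hsb p := ⟨0, 1, 0⟩

lemma X_pow (n : ℕ) : (X : Hsb p) ^ n = ⟨(n : ZMod p), 0, 0⟩ := by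
  induction n with
  | zero => simp [one_def]
  | succ m ih => rw [pow_succ, ih, mul_def]; ext <;> simp [X] <;> push_cast <;> ring

lemma Y_pow (n : ℕ) : (Y : Hsb p) ^ n = ⟨0, (n : ZMod p), 0⟩ := by
  induction n with
  | zero => simp [one_def]
  | succ m ih => rw [pow_succ, ih, mul_def]; ext <;> simp [Y] <;> push_cast <;> ring

lemma a_zero_comm {u v : Hsb p} (hu : u.a = 0) (hv : v.a = 0) : u * v = v * u := by
  simp only [mul_def]
  ext <;> simp [hu, hv] <;> ring

lemma comm_eq_one {u v : Hsb p} (hu : u.a = 0) (hv : v.a = 0) : ⁅u, v⁆ = 1 := by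
  exact commutatorElement_eq_one_iff_commute.2 (a_zero_comm hu hv)

end Hsb

namespace St13

/-- The lifting map to Hsb. -/
def fH (p : ℕ) : Fin 2 → Hsb p := fun i => if i = 0 then Hsb.X else Hsb.Y

lemma liftf_x (p : ℕ) : FreeGroup.lift (fH p) xF = (Hsb.X : Hsb p) := by
  simp [xF, fH]
lemma liftf_y (p : ℕ) : FreeGroup.lift (fH p) yF = (Hsb.Y : Hsb p) := by
  simp [yF, fH]

lemma liftf_yiF_a (p : ℕ) (i : ℕ) : (FreeGroup.lift (fH p) (yiF i)).a = 0 := by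
  simp only [yiF, map_mul, map_inv, map_pow, liftf_x, liftf_y]
  rw [Hsb.X_pow]
  simp [Hsb.inv_def, Hsb.mul_def, Hsb.Y]

lemma lift_rels (p k : ℕ) (hp : 0 < p) (hk : 1 ≤ k) :
    ∀ r ∈ relsK p k, FreeGroup.lift (fH p) r = 1 := by
  intro r hr
  rcases hr with hr | hr
  · rcases hr with rfl | rfl | rfl | rfl
    · have h0 : ((p ^ (k + 1) : ℕ) : ZMod p) = 0 :=
        (ZMod.natCast_eq_zero_iff _ _).2 (dvd_pow_self p (by omega))
      rw [map_pow, liftf_x, Hsb.X_pow, h0]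
      rfl
    · have h0 : ((p ^ 2 : ℕ) : ZMod p) = 0 :=
        (ZMod.natCast_eq_zero_iff _ _).2 (dvd_pow_self p (by omega))
      rw [map_pow, liftf_y, Hsb.Y_pow, h0]
      rfl
    · rw [map_commutatorElement, map_pow, liftf_x, liftf_y]
      apply commutatorElement_eq_one_iff_commute.2
      have : (Hsb.X : Hsb p) ^ p ^ k = 1 := by
        rw [Hsb.X_pow]
        have : ((p ^ k : ℕ) : ZMod p) = 0 :=
          (ZMod.natCast_eq_zero_iff _ _).2 (dvd_pow_self p (by omega))
        rw [this]; rfl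
      rw [this]
      exact Commute.one_left _
    · rw [map_commutatorElement, map_pow, liftf_x, liftf_y]
      apply commutatorElement_eq_one_iff_commute.2
      have h0 : ((p : ℕ) : ZMod p) = 0 := ZMod.natCast_self p
      have : (Hsb.Y : Hsb p) ^ p = 1 := by
        rw [Hsb.Y_pow, h0]; rfl
      rw [this]
      exact Commute.one_left _
  · simp only [Set.mem_iUnion] at hr
    obtain ⟨i, hi, hr⟩ := hr
    have ha0 := liftf_yiF_a p 0
    have hai := liftf_yiF_a p i
    have hcomm : ⁅FreeGroup.lift (fH p) (yiF 0), FreeGroup.lift (fH p) (yiF i)⁆ = 1 :=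
      Hsb.comm_eq_one ha0 hai
    rcases hr with rfl | rfl | hr
    · rw [map_pow, map_commutatorElement, hcomm, one_pow]
    · rw [map_commutatorElement, map_commutatorElement, hcomm]
      simp only [commutatorElement_def]
      group
    · rcases hr with rfl
      rw [map_commutatorElement, map_commutatorElement, hcomm]
      simp only [commutatorElement_def]
      group

lemma comm_xy_ne_one (p k : ℕ) (hp : 1 < p) (hk : 1 ≤ k) :
    ⁅xG p k, yG p k⁆ ≠ 1 := by
  intro h
  have hφ := PresentedGroup.toGroup (lift_rels p k (by omega) hk)
  set φ := PresentedGroup.toGroup (lift_rels p k (by omega) hk) with hφdef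
  have hx : φ (xG p k) = Hsb.X := PresentedGroup.toGroup.of _
  have hy : φ (yG p k) = Hsb.Y := PresentedGroup.toGroup.of _
  have h2 : ⁅(Hsb.X : Hsb p), (Hsb.Y : Hsb p)⁆ = 1 := by
    rw [← hx, ← hy, ← map_commutatorElement, h, map_one]
  have : Hsb.X * Hsb.Y = Hsb.Y * Hsb.X :=
    commutatorElement_eq_one_iff_commute.1 h2
  rw [Hsb.mul_def, Hsb.mul_def] at this
  have hc := congrArg Hsb.c this
  simp [Hsb.X, Hsb.Y] at hc
  haveI : Fact (1 < p) := ⟨hp⟩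
  exact one_ne_zero hc

lemma comm_xy_unfold_2 : True := trivial

end St13


/-- For an odd prime `p`, the derived subgroup `γ_2(G_k) = [G_k, G_k]`
has exponent `p`. -/
theorem stmt13 (p k : ℕ) (hp : p.Prime) (hodd : Odd p) (hk : 1 ≤ k) :
    Monoid.exponent ↥(commutator (Gk p k)) = p := by
  have hle : commutator (Gk p k) ≤ St13.K p k := St13.commutator_le_K p k hodd
  have hpow : ∀ g : ↥(commutator (Gk p k)), g ^ p = 1 := by
    intro g
    have h1 : (g : Gk p k) ^ p = 1 := St13.K_pow p k hodd (hle g.2)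
    exact Subtype.ext (by simpa using h1)
  have hdvd : Monoid.exponent ↥(commutator (Gk p k)) ∣ p :=
    Monoid.exponent_dvd_of_forall_pow_eq_one hpow
  rcases (Nat.Prime.eq_one_or_self_of_dvd hp _ hdvd) with h1 | h1
  · exfalso
    have hmem : ⁅xG p k, yG p k⁆ ∈ commutator (Gk p k) := by
      rw [commutator_def]
      exact Subgroup.commutator_mem_commutator (Subgroup.mem_top _) (Subgroup.mem_top _)
    set w : ↥(commutator (Gk p k)) := ⟨⁅xG p k, yG p k⁆, hmem⟩ with hw
    have hwp : w ^ Monoid.exponent ↥(commutator (Gk p k)) = 1 :=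
      Monoid.pow_exponent_eq_one w
    rw [h1, pow_one] at hwp
    have : ⁅xG p k, yG p k⁆ = 1 := by
      have := congrArg (Subtype.val) hwp
      simpa [hw] using this
    exact St13.comm_xy_ne_one p k hp.one_lt hk this
  · exact h1
end
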